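/- arXiv:1304.2843 — 5 statements merged into one kernel-verified Lean document; each statement's English description precedes it below -/
import Mathlib

section
/- Let m ≥ 2 be an integer, let H be a real-valued homogeneous polynomial of degree 2m containing no harmonic terms, and let α ∈ ℂ∖{0}. If H_{j,q̄}(α) = 0 for all integers j, q ≥ 1 with j + q < 2m, then there exist a ∈ ℝ∖{0} and ν ∈ ℝ such that H(z) = a((2Re(e^{iν}z))^{2m} − 2Re((e^{iν}z)^{2m})) for all z ∈ ℂ and Re(e^{iν}α) = 0. -/
open Complex Finset Metric Filter Topology Asymptotics
open scoped ENNReal NNReal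

noncomputable section

/-- `Hpoly m a z = Σ_{j=1}^{2m-1} a_{2m-j} z^j conj(z)^{2m-j}`. -/
def Hpoly (m : ℕ) (a : ℕ → ℂ) (z : ℂ) : ℂ :=
  ∑ j ∈ Finset.Icc 1 (2 * m - 1), a (2 * m - j) * z ^ j * (starRingEnd ℂ z) ^ (2 * m - j)

/-- The coefficients `a` give a real-valued polynomial that is not identically zero. -/
def GoodCoeff (m : ℕ) (a : ℕ → ℂ) : Prop :=
  (∀ j ∈ Finset.Icc 1 (2 * m - 1), a j = starRingEnd ℂ (a (2 * m - j))) ∧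
  (∃ j ∈ Finset.Icc 1 (2 * m - 1), a j ≠ 0)

/-- Subharmonicity: the Laplacian is a nonnegative real number at every point. -/
def SubharmonicCoeff (m : ℕ) (a : ℕ → ℂ) : Prop :=
  ∀ z : ℂ,
    ((4 : ℂ) * ∑ j ∈ Finset.Icc 1 (2 * m - 1),
      (j : ℂ) * ((2 * m - j : ℕ) : ℂ) * a (2 * m - j) * z ^ (j - 1) *
        (starRingEnd ℂ z) ^ (2 * m - j - 1)).im = 0 ∧
    0 ≤ ((4 : ℂ) * ∑ j ∈ Finset.Icc 1 (2 * m - 1),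
      (j : ℂ) * ((2 * m - j : ℕ) : ℂ) * a (2 * m - j) * z ^ (j - 1) *
        (starRingEnd ℂ z) ^ (2 * m - j - 1)).re

/-- The model domain `M_H`. -/
def modelM (H : ℂ → ℝ) : Set (ℂ × ℂ) := {z : ℂ × ℂ | z.2.re + H z.1 < 0}

/-- The tube domain `Ω_m`. -/
def OmegaM (m : ℕ) : Set (ℂ × ℂ) := {z : ℂ × ℂ | z.2.re + z.1.re ^ (2 * m) < 0}

/-- `f` is a biholomorphism from `Ω₁` onto `Ω₂`. -/
def IsBiholoOn (Ω₁ Ω₂ : Set (ℂ × ℂ)) (f : ℂ × ℂ → ℂ × ℂ) : Prop :=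
  DifferentiableOn ℂ f Ω₁ ∧ Set.MapsTo f Ω₁ Ω₂ ∧
    ∃ g : ℂ × ℂ → ℂ × ℂ, DifferentiableOn ℂ g Ω₂ ∧ Set.MapsTo g Ω₂ Ω₁ ∧
      (∀ z ∈ Ω₁, g (f z) = z) ∧ (∀ w ∈ Ω₂, f (g w) = w)

/-- `f` is an automorphism of `Ω`. -/
def IsAutomorphismOf (Ω : Set (ℂ × ℂ)) (f : ℂ × ℂ → ℂ × ℂ) : Prop :=
  IsBiholoOn Ω Ω f

/-- Mixed Wirtinger derivative `H_{j,q̄}`. -/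
def Hmix (m : ℕ) (a : ℕ → ℂ) (j q : ℕ) (z : ℂ) : ℂ :=
  ∑ k ∈ (Finset.Icc j (2 * m - 1)).filter (fun k => q ≤ 2 * m - k),
    a (2 * m - k) * (k.descFactorial j : ℂ) * ((2 * m - k).descFactorial q : ℂ) *
      z ^ (k - j) * (starRingEnd ℂ z) ^ (2 * m - k - q)

/-- Holomorphic Wirtinger derivative `H_j`. -/
def Hhol (m : ℕ) (a : ℕ → ℂ) (j : ℕ) (z : ℂ) : ℂ :=
  ∑ k ∈ Finset.Icc j (2 * m - 1),
    a (2 * m - k) * (k.descFactorial j : ℂ) * z ^ (k - j) * (starRingEnd ℂ z) ^ (2 * m - k)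

/-- `ε(a) = |Re a₂ + H(a₁)|`. -/
def epsAt (H : ℂ → ℝ) (p : ℂ × ℂ) : ℝ := |p.2.re + H p.1|

/-- The `(j,q)` coefficient of the rescaled polynomial `H_{a,τ}`. -/
def scaledCoeff (m : ℕ) (a : ℕ → ℂ) (H : ℂ → ℝ) (p : ℂ × ℂ) (τ : ℝ) (j q : ℕ) : ℂ :=
  Hmix m a j q p.1 * (τ : ℂ) ^ (j + q) /
    ((j.factorial : ℂ) * (q.factorial : ℂ) * (epsAt H p : ℂ))

/-- Index pairs `(j,q)` with `j, q ≥ 1` and `j + q ≤ 2m`. -/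
def coeffPairs (m : ℕ) : Finset (ℕ × ℕ) :=
  (Finset.Icc 1 (2 * m) ×ˢ Finset.Icc 1 (2 * m)).filter (fun jq => jq.1 + jq.2 ≤ 2 * m)

/-- `‖H_{a,τ}‖`, the maximum modulus of the coefficients of the rescaled polynomial. -/
def HscaledNorm (m : ℕ) (a : ℕ → ℂ) (H : ℂ → ℝ) (p : ℂ × ℂ) (τ : ℝ) : ℝ :=
  (((coeffPairs m).sup fun jq =>
    Real.toNNReal ‖scaledCoeff m a H p τ jq.1 jq.2‖) : ℝ≥0)

/-- Vanishing order at `0 ∈ ℂ` of a map, via big-O estimates. -/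
def vOrder {E : Type*} [NormedAddCommGroup E] (u : ℂ → E) : ℝ≥0∞ :=
  sSup {c : ℝ≥0∞ | ∃ k : ℕ, c = (k : ℝ≥0∞) ∧ u =O[𝓝 (0 : ℂ)] fun z : ℂ => ‖z‖ ^ k}

/-- The D'Angelo type of `∂M_H` at `p`. -/
def dAngeloType (H : ℂ → ℝ) (p : ℂ × ℂ) : ℝ≥0∞ :=
  ⨆ (γ : ℂ → ℂ × ℂ) (_ : ∃ r > 0, DifferentiableOn ℂ γ (Metric.ball 0 r) ∧
      γ 0 = p ∧ ¬ ∀ z ∈ Metric.ball (0 : ℂ) r, γ z = p),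
    vOrder (fun t => ((γ t).2.re + H (γ t).1 : ℝ)) / vOrder (fun t => γ t - p)

/-! Put `c k = a (2m-k) α^k conj(α)^(2m-k)`. Multiplying `H_{j,1̄}(α)` by `α^j conj(α)`, the
hypotheses with `q = 1` become the triangular system `∑ₖ (2m-k) c k · k(k-1)⋯(k-j+1) = 0`,
`1 ≤ j ≤ 2m-2`, in the `2m-1` unknowns `(2m-k) c k`. Its solutions are the multiples of
`(-1)^k binom(2m-1,k)`, which solves it because the `j`-th derivative of `(1-x)^(2m-1)` vanishes
at `1`. So `c k = b (-1)^k binom(2m,k)`, where `b` is real because `H` is real-valued and nonzero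
because `H ≠ 0`. Hence `H z = b (-1)^m ∑ₖ binom(2m,k) wᵏ conj(w)^(2m-k)` with `w = i z / α`, which is
`b (-1)^m ((2 Re w)^(2m) - 2 Re (w^(2m)))`; finally `i / α = |α|⁻¹ e^{iν}` with `Re(e^{iν} α) = 0`. -/

theorem sum_range_succ_eq_add_sum_Icc_one {M : Type*} [AddCommMonoid M] (f : ℕ → M) (N : ℕ) :
    ∑ k ∈ range (N + 1), f k = f 0 + ∑ k ∈ Icc 1 N, f k := by
  rw [Nat.range_succ_eq_Icc_zero, Icc_eq_cons_Ioc (Nat.zero_le _), sum_cons,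
    ← Finset.Icc_succ_left_eq_Ioc]
  rfl

open Polynomial in
theorem sum_neg_one_pow_mul_choose_mul_descFactorial {R : Type*} [CommRing R] {N j : ℕ}
    (hj : j < N) :
    ∑ k ∈ range (N + 1), (-1 : R) ^ k * N.choose k * k.descFactorial j = 0 := by
  have hexpand : ((X : R[X]) ^ N).comp (1 - X) =
      ∑ k ∈ range (N + 1), C ((-1 : R) ^ k * N.choose k) * X ^ k := by
    rw [X_pow_comp, sub_eq_neg_add, add_pow]
    refine sum_congr rfl fun k _ => ?_
    rw [neg_pow, one_pow, mul_one, C_mul, C_pow, C_neg, C_1, map_natCast]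
    ring
  have h := congrArg (fun p => (derivative^[j] p).eval 1) hexpand
  simp only [iterate_derivative_comp_one_sub_X, iterate_derivative_sum, iterate_derivative_C_mul,
    iterate_derivative_X_pow_eq_smul, eval_finsetSum, eval_mul, eval_C, eval_smul, eval_pow,
    eval_X, eval_comp, eval_sub, eval_one, sub_self, zero_pow (Nat.sub_ne_zero_of_lt hj),
    one_pow] at h
  simpa using h.symm

section LinearSystem

variable {K : Type*} [Field K] [CharZero K]

theorem eq_zero_of_sum_mul_descFactorial_eq_zero {d : ℕ → K} :
    ∀ {N : ℕ}, (∀ j ∈ Icc 1 N, ∑ k ∈ Icc 1 N, d k * k.descFactorial j = 0) →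
      ∀ k ∈ Icc 1 N, d k = 0
  | 0, _ => by simp
  | N + 1, h => by
    have hsplit (j : ℕ) : ∑ k ∈ Icc 1 (N + 1), d k * k.descFactorial j =
        ∑ k ∈ Icc 1 N, d k * k.descFactorial j + d (N + 1) * (N + 1).descFactorial j :=
      sum_Icc_succ_top (by omega) _
    have htop : d (N + 1) = 0 := by
      have hN := h (N + 1) (by simp)
      rw [hsplit, sum_eq_zero fun k hk => by
        rw [Nat.descFactorial_of_lt (by simp at hk; omega), Nat.cast_zero, mul_zero]] at hN
      simpa [Nat.descFactorial_self, Nat.factorial_ne_zero] using hN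
    have hlow := eq_zero_of_sum_mul_descFactorial_eq_zero fun j hj => by
      simpa [hsplit, htop] using h j (by simp at hj ⊢; omega)
    intro k hk
    rcases (mem_Icc.1 hk).2.lt_or_eq with hk' | rfl
    · exact hlow k (by simp at hk ⊢; omega)
    · exact htop

theorem eq_neg_one_pow_mul_choose_of_sum_mul_descFactorial_eq_zero {N : ℕ} {w : ℕ → K}
    (h : ∀ j ∈ Icc 1 (N - 1), ∑ k ∈ Icc 1 N, w k * k.descFactorial j = 0) :
    ∀ k ∈ Icc 1 N, w k = (-1) ^ (N + k) * N.choose k * w N := by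
  obtain _ | N := N
  · simp
  set d : ℕ → K := fun k => w k - (-1) ^ (N + 1 + k) * (N + 1).choose k * w (N + 1)
  have hd_top : d (N + 1) = 0 := by simp [d, ← two_mul, pow_mul]
  have hd (j : ℕ) (hj : j ∈ Icc 1 N) : ∑ k ∈ Icc 1 N, d k * k.descFactorial j = 0 := by
    have hj' := mem_Icc.1 hj
    have hsol := sum_neg_one_pow_mul_choose_mul_descFactorial (R := K) (N := N + 1) (j := j)
      (by omega)
    rw [sum_range_succ_eq_add_sum_Icc_one, Nat.descFactorial_of_lt hj'.1, Nat.cast_zero,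
      mul_zero, zero_add] at hsol
    calc ∑ k ∈ Icc 1 N, d k * k.descFactorial j
        = ∑ k ∈ Icc 1 (N + 1), d k * k.descFactorial j := by
          rw [sum_Icc_succ_top (by omega), hd_top, zero_mul, add_zero]
      _ = ∑ k ∈ Icc 1 (N + 1), w k * k.descFactorial j - (-1) ^ (N + 1) * w (N + 1) *
            ∑ k ∈ Icc 1 (N + 1), (-1 : K) ^ k * (N + 1).choose k * k.descFactorial j := by
          simp only [d, sub_mul, sum_sub_distrib, mul_sum]
          exact congrArg _ (sum_congr rfl fun _ _ => by ring)
      _ = 0 := by rw [h j (by simpa using hj), hsol, mul_zero, sub_zero]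
  intro k hk
  rcases (mem_Icc.1 hk).2.lt_or_eq with hk' | rfl
  · exact sub_eq_zero.1 (eq_zero_of_sum_mul_descFactorial_eq_zero hd k (by simp at hk ⊢; omega))
  · simp [← two_mul, pow_mul]

theorem exists_eq_mul_neg_one_pow_mul_choose_of_sum_eq_zero {n : ℕ} {c : ℕ → K}
    (h : ∀ j ∈ Icc 1 (n - 2),
      ∑ k ∈ Icc 1 (n - 1), ((n - k : ℕ) : K) * c k * k.descFactorial j = 0) :
    ∃ B : K, ∀ k ∈ Icc 1 (n - 1), c k = B * (-1) ^ k * n.choose k := by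
  obtain _ | N := n
  · exact ⟨0, by simp⟩
  refine ⟨(-1) ^ N * c N / (N + 1), fun k hk => ?_⟩
  have hk' := mem_Icc.1 hk
  have hw := eq_neg_one_pow_mul_choose_of_sum_mul_descFactorial_eq_zero
    (w := fun k => ((N + 1 - k : ℕ) : K) * c k) (N := N) (by simpa using h) k (by simpa using hk)
  simp only [add_tsub_cancel_left, Nat.cast_one, one_mul] at hw
  have hchoose : (N.choose k : K) * (N + 1) = (N + 1).choose k * ((N + 1 - k : ℕ) : K) := by
    exact_mod_cast Nat.choose_mul_succ_eq N k
  rw [div_mul_eq_mul_div, div_mul_eq_mul_div, eq_div_iff (Nat.cast_add_one_ne_zero N)]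
  apply mul_left_cancel₀ (Nat.cast_ne_zero.2 (by omega) : ((N + 1 - k : ℕ) : K) ≠ 0)
  linear_combination (N + 1 : K) * hw + (-1) ^ N * (-1) ^ k * c N * hchoose

end LinearSystem

theorem sum_choose_mul_pow_mul_conj_pow {n : ℕ} (hn : 1 ≤ n) (w : ℂ) :
    ∑ k ∈ Icc 1 (n - 1), (n.choose k : ℂ) * w ^ k * starRingEnd ℂ w ^ (n - k) =
      ((2 * w.re) ^ n - 2 * (w ^ n).re : ℝ) := by
  obtain ⟨N, rfl⟩ : ∃ N, n = N + 1 := ⟨n - 1, by omega⟩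
  rw [ofReal_sub, ofReal_pow, ← add_conj, ← add_conj (w ^ (N + 1)), add_pow, sum_range_succ,
    sum_range_succ_eq_add_sum_Icc_one, add_tsub_cancel_right]
  simp only [pow_zero, one_mul, tsub_zero, Nat.choose_zero_right, Nat.cast_one, mul_one,
    tsub_self, Nat.choose_self, map_pow]
  rw [sum_congr rfl fun k _ => mul_rotate _ _ _]
  ring

theorem neg_one_pow_mul_pow_mul_conj_pow {m k : ℕ} (hk : k ≤ 2 * m) (u : ℂ) :
    (-1) ^ k * (u ^ k * starRingEnd ℂ u ^ (2 * m - k)) =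
      (-1) ^ m * ((I * u) ^ k * starRingEnd ℂ (I * u) ^ (2 * m - k)) := by
  obtain ⟨l, hl⟩ := Nat.exists_eq_add_of_le hk
  have hI (n : ℕ) : I ^ n * I ^ n = (-1) ^ n := by rw [← mul_pow, I_mul_I]
  have hIl : I ^ l * I ^ l * (-1) ^ l = 1 := by rw [hI, ← mul_pow]; norm_num
  have hm : (-1 : ℂ) ^ m = I ^ k * I ^ l := by rw [← pow_add, ← hl, pow_mul, I_sq]
  rw [hm, show 2 * m - k = l by omega, map_mul, conj_I, mul_pow, mul_pow, neg_pow]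
  linear_combination (-(I ^ l * I ^ l * (-1) ^ l * u ^ k * starRingEnd ℂ u ^ l)) * hI k
    - ((-1) ^ k * u ^ k * starRingEnd ℂ u ^ l) * hIl

theorem GoodCoeff.pos {m : ℕ} {a : ℕ → ℂ} (h : GoodCoeff m a) : 0 < m := by
  obtain ⟨j, hj, -⟩ := h.2
  simp only [mem_Icc] at hj
  omega

theorem Hmix_one_mul (m : ℕ) (a : ℕ → ℂ) {j : ℕ} (hj : 1 ≤ j) (z : ℂ) :
    Hmix m a j 1 z * (z ^ j * starRingEnd ℂ z) =
      ∑ k ∈ Icc 1 (2 * m - 1), ((2 * m - k : ℕ) : ℂ) *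
        (a (2 * m - k) * z ^ k * starRingEnd ℂ z ^ (2 * m - k)) * k.descFactorial j := by
  have hfilter : (Icc j (2 * m - 1)).filter (fun k => 1 ≤ 2 * m - k) = Icc j (2 * m - 1) :=
    filter_true_of_mem fun k hk => by simp at hk; omega
  rw [Hmix, hfilter, sum_mul, ← sum_subset (Icc_subset_Icc_left hj) fun k hk hkj => by
    rw [Nat.descFactorial_of_lt (by simp at hk hkj; omega), Nat.cast_zero, mul_zero]]
  refine sum_congr rfl fun k hk => ?_
  have hk' := mem_Icc.1 hk
  rw [← pow_sub_mul_pow z hk'.1, ← pow_sub_one_mul (by omega : 2 * m - k ≠ 0) (starRingEnd ℂ z),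
    Nat.descFactorial_one]
  ring

theorem exists_coeff_eq_of_Hmix_eq_zero {m : ℕ} {a : ℕ → ℂ} (hgood : GoodCoeff m a) {α : ℂ}
    (hα : α ≠ 0) (hvan : ∀ j ∈ Icc 1 (2 * m - 2), Hmix m a j 1 α = 0) :
    ∃ b : ℝ, b ≠ 0 ∧ ∀ k ∈ Icc 1 (2 * m - 1),
      a (2 * m - k) * α ^ k * starRingEnd ℂ α ^ (2 * m - k) = b * (-1) ^ k * (2 * m).choose k := by
  have hm := hgood.pos
  obtain ⟨B, hB⟩ := exists_eq_mul_neg_one_pow_mul_choose_of_sum_eq_zero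
    (c := fun k => a (2 * m - k) * α ^ k * starRingEnd ℂ α ^ (2 * m - k)) fun j hj => by
      rw [← Hmix_one_mul m a (mem_Icc.1 hj).1 α, hvan j hj, zero_mul]
  have hreal : starRingEnd ℂ B = B := by
    have hlow := hB 1 (by simp; omega)
    have htop := hB (2 * m - 1) (by simp; omega)
    have hsymm := congrArg (starRingEnd ℂ) hlow
    simp only [map_mul, map_pow, conj_conj, ← hgood.1 1 (by simp; omega)] at hsymm
    rw [show 2 * m - (2 * m - 1) = 1 by omega, Nat.choose_symm (by omega),
      Odd.neg_one_pow ⟨m - 1, by omega⟩] at htop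
    simp only [map_neg, map_one, map_natCast, pow_one, Nat.choose_one_right] at hsymm htop
    apply mul_right_cancel₀ (neg_ne_zero.2 (Nat.cast_ne_zero.2 (by omega) : ((2 * m : ℕ) : ℂ) ≠ 0))
    linear_combination htop - hsymm
  have hB0 : B ≠ 0 := by
    obtain ⟨j, hj, haj⟩ := hgood.2
    have hj' := mem_Icc.1 hj
    have hc := hB (2 * m - j) (by simp; omega)
    rw [show 2 * m - (2 * m - j) = j by omega] at hc
    rintro rfl
    simp [haj, hα] at hc
  exact ⟨B.re, fun h => hB0 (by rw [← conj_eq_iff_re.1 hreal, h, ofReal_zero]),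
    by rwa [conj_eq_iff_re.1 hreal]⟩

theorem Hpoly_eq_of_coeff_eq {m : ℕ} (hm : 0 < m) {a : ℕ → ℂ} {α : ℂ} (hα : α ≠ 0) {b : ℝ}
    (hb : ∀ k ∈ Icc 1 (2 * m - 1),
      a (2 * m - k) * α ^ k * starRingEnd ℂ α ^ (2 * m - k) = b * (-1) ^ k * (2 * m).choose k)
    (z : ℂ) :
    Hpoly m a z = (b * (-1) ^ m *
      ((2 * (I * z / α).re) ^ (2 * m) - 2 * ((I * z / α) ^ (2 * m)).re) : ℝ) := by
  rw [ofReal_mul, ← sum_choose_mul_pow_mul_conj_pow (by omega), Hpoly, mul_sum]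
  refine sum_congr rfl fun k hk => ?_
  have hk' := mem_Icc.1 hk
  have hterm : a (2 * m - k) * z ^ k * starRingEnd ℂ z ^ (2 * m - k) =
      b * (-1) ^ k * (2 * m).choose k * ((z / α) ^ k * starRingEnd ℂ (z / α) ^ (2 * m - k)) := by
    have hα' : starRingEnd ℂ α ≠ 0 := (map_ne_zero _).2 hα
    rw [← hb k hk, map_div₀, div_pow, div_pow]
    field_simp
  rw [hterm, mul_div_assoc]
  push_cast
  linear_combination (b * (2 * m).choose k : ℂ) *
    neg_one_pow_mul_pow_mul_conj_pow (by omega : k ≤ 2 * m) (z / α)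

theorem statement_7_general (m : ℕ) (a : ℕ → ℂ) (H : ℂ → ℝ)
    (hH : ∀ z : ℂ, (H z : ℂ) = Hpoly m a z)
    (hgood : GoodCoeff m a)
    (α : ℂ) (hα : α ≠ 0)
    (hvan : ∀ j q : ℕ, 1 ≤ j → 1 ≤ q → j + q < 2 * m → Hmix m a j q α = 0) :
    ∃ A : ℝ, A ≠ 0 ∧ ∃ ν : ℝ,
      (∀ z : ℂ, H z = A * ((2 * (Complex.exp (Complex.I * ν) * z).re) ^ (2 * m)
        - 2 * ((Complex.exp (Complex.I * ν) * z) ^ (2 * m)).re)) ∧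
      (Complex.exp (Complex.I * ν) * α).re = 0 := by
  obtain ⟨b, hb0, hb⟩ := exists_coeff_eq_of_Hmix_eq_zero hgood hα fun j hj =>
    hvan j 1 (mem_Icc.1 hj).1 le_rfl (by have := mem_Icc.1 hj; omega)
  set s := ‖I / α‖
  set ν := arg (I / α)
  have hs : s ≠ 0 := norm_ne_zero_iff.2 (div_ne_zero I_ne_zero hα)
  have hrot : (s : ℂ) * exp (I * ν) = I / α := by rw [mul_comm I]; exact norm_mul_exp_arg_mul_I _
  refine ⟨b * (-1) ^ m * s ^ (2 * m), by simp [hb0, hs], ν, fun z => ?_, ?_⟩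
  · apply ofReal_injective
    rw [hH, Hpoly_eq_of_coeff_eq hgood.pos hα hb, mul_div_right_comm, ← hrot,
      mul_assoc (s : ℂ), mul_pow (s : ℂ), ← ofReal_pow, re_ofReal_mul, re_ofReal_mul, ofReal_inj]
    ring
  · have h : ((s : ℂ) * (exp (I * ν) * α)).re = 0 := by
      rw [← mul_assoc, hrot, div_mul_cancel₀ _ hα, I_re]
    rw [re_ofReal_mul] at h
    exact (mul_eq_zero.1 h).resolve_left hs

/-- if all mixed derivatives `H_{j,q̄}` of total order `< 2m` vanish at some
`α ≠ 0`, then `H` has the special form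
`a((2Re(e^{iν}z))^{2m} − 2Re((e^{iν}z)^{2m}))` with `Re(e^{iν}α) = 0`. -/
theorem statement_7 (m : ℕ) (hm : 2 ≤ m) (a : ℕ → ℂ) (H : ℂ → ℝ)
    (hH : ∀ z : ℂ, (H z : ℂ) = Hpoly m a z)
    (hgood : GoodCoeff m a)
    (α : ℂ) (hα : α ≠ 0)
    (hvan : ∀ j q : ℕ, 1 ≤ j → 1 ≤ q → j + q < 2 * m → Hmix m a j q α = 0) :
    ∃ A : ℝ, A ≠ 0 ∧ ∃ ν : ℝ,
      (∀ z : ℂ, H z = A * ((2 * (Complex.exp (Complex.I * ν) * z).re) ^ (2 * m)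
        - 2 * ((Complex.exp (Complex.I * ν) * z) ^ (2 * m)).re)) ∧
      (Complex.exp (Complex.I * ν) * α).re = 0 :=
  statement_7_general m a H hH hgood α hα hvan
end
end

section
/- Let m ≥ 2 be an integer, let H be a real-valued homogeneous polynomial of degree 2m containing no harmonic terms, let β ∈ ℝ∖{0} and ν ∈ ℝ, and suppose that H_{1,1̄}(z) = β (Re(e^{iν}z))^{2m−2} for all z ∈ ℂ. Then there exists a ∈ ℝ∖{0} such that H(z) = a((2Re(e^{iν}z))^{2m} − 2Re((e^{iν}z)^{2m})) for all z ∈ ℂ. -/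
open Complex Finset Metric Filter Topology Asymptotics
open scoped ENNReal NNReal

noncomputable section

/-! Write `w = e^{iν} z`. Expanding `(Re w)^{2m-2} = ((w + w̄)/2)^{2m-2}` binomially and comparing
coefficients of `z^j z̄^{2m-2-j}` (these are unique: on the unit circle `z̄ = z⁻¹`, so the
vanishing of such a sum is that of a one-variable polynomial with infinitely many roots) with
those of `H_{1,1̄}` determines every coefficient of `H`. Since
`k (2m-k) C(2m,k) = 2m (2m-1) C(2m-2,k-1)` and `|e^{iν}| = 1`, they are those of
`A ((w + w̄)^{2m} - w^{2m} - w̄^{2m})` with `A = β / (2^{2m-2} 2m (2m-1))`. -/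

open ComplexConjugate Polynomial

theorem Nat.add_one_mul_add_one_mul_choose (i l : ℕ) :
    (i + 1) * (l + 1) * (i + l + 2).choose (i + 1) =
      (i + l + 2) * (i + l + 1) * (i + l).choose i := by
  have h₁ := Nat.add_one_mul_choose_eq (i + l + 1) i
  have h₂ := Nat.choose_mul_succ_eq (i + l) i
  rw [show i + l + 1 - i = l + 1 by omega] at h₂
  calc (i + 1) * (l + 1) * (i + l + 2).choose (i + 1)
      = (l + 1) * ((i + l + 2).choose (i + 1) * (i + 1)) := by ring
    _ = (i + l + 2) * ((i + l + 1).choose i * (l + 1)) := by rw [← h₁]; ring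
    _ = (i + l + 2) * (i + l + 1) * (i + l).choose i := by rw [← h₂]; ring

theorem add_pow_sub_pow_sub_pow {R : Type*} [CommRing R] (x y : R) (n : ℕ) :
    (x + y) ^ (n + 2) - x ^ (n + 2) - y ^ (n + 2) =
      ∑ j ∈ range (n + 1), x ^ (j + 1) * y ^ (n + 1 - j) * (n + 2).choose (j + 1) := by
  rw [add_pow, sum_range_succ, sum_range_succ']
  simp

theorem Complex.ofReal_re_pow_eq_sum (w : ℂ) (n : ℕ) :
    (w.re : ℂ) ^ n =
      ∑ j ∈ range (n + 1), (n.choose j / 2 ^ n : ℂ) * w ^ j * conj w ^ (n - j) := by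
  rw [Complex.re_eq_add_conj, div_pow, add_pow, sum_div]
  refine sum_congr rfl fun j _ => ?_
  ring

theorem Complex.eq_zero_of_forall_sum_mul_pow_mul_conj_pow_eq_zero {n : ℕ} {c : ℕ → ℂ}
    (h : ∀ z : ℂ, ∑ j ∈ range (n + 1), c j * z ^ j * conj z ^ (n - j) = 0)
    {j : ℕ} (hj : j ≤ n) : c j = 0 := by
  set P : ℂ[X] := ∑ j ∈ range (n + 1), C (c j) * X ^ (2 * j)
  have hroot : ∀ z ∈ Metric.sphere (0 : ℂ) 1, P.IsRoot z := by
    intro z hz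
    have hz' : z * conj z = 1 := by simp_all [Complex.mul_conj']
    have : P.eval z = z ^ n * ∑ j ∈ range (n + 1), c j * z ^ j * conj z ^ (n - j) := by
      simp only [P, eval_finsetSum, eval_mul, eval_C, eval_pow, eval_X, mul_sum]
      refine sum_congr rfl fun j hj => ?_
      obtain ⟨l, rfl⟩ := Nat.exists_eq_add_of_le (mem_range_succ_iff.mp hj)
      rw [Nat.add_sub_cancel_left]
      linear_combination (-(c j) * z ^ (2 * j)) * (pow_mul_pow_eq_one l hz')
    rw [IsRoot, this, h z, mul_zero]
  have hP : P = 0 := by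
    refine eq_zero_of_infinite_isRoot P (Set.Infinite.mono hroot ?_)
    refine (isPreconnected_sphere (by simp) 0 1).infinite_of_nontrivial
      ⟨1, ?_, -1, ?_, by norm_num⟩ <;> simp
  have := congrArg (coeff · (2 * j)) hP
  simp only [P, finsetSum_coeff, coeff_C_mul_X_pow, coeff_zero] at this
  rwa [sum_eq_single j (fun i _ hij => if_neg (by omega)) (by simp; omega), if_pos rfl] at this

section

variable {m n : ℕ} {a : ℕ → ℂ}

theorem Hmix_one_one_eq_sum (hn : 2 * m = n + 2) (z : ℂ) :
    Hmix m a 1 1 z = ∑ j ∈ range (n + 1),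
      ((j + 1) * (n + 1 - j) : ℕ) * a (n + 1 - j) * z ^ j * conj z ^ (n - j) := by
  rw [Hmix, hn, filter_true_of_mem fun k hk => by simp at hk; omega,
    Nat.add_sub_assoc (by norm_num), ← Ico_add_one_right_eq_Icc, sum_Ico_eq_sum_range]
  refine sum_congr (by simp) fun j hj => ?_
  have hj : j ≤ n := by simp at hj; omega
  rw [show n + 2 - (1 + j) = n + 1 - j by omega, show n + 1 - j - 1 = n - j by omega,
    Nat.descFactorial_one, Nat.descFactorial_one, Nat.add_sub_cancel_left, add_comm 1 j]
  push_cast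
  ring

theorem Hpoly_eq_sum (hn : 2 * m = n + 2) (z : ℂ) :
    Hpoly m a z = ∑ j ∈ range (n + 1), a (n + 1 - j) * z ^ (j + 1) * conj z ^ (n + 1 - j) := by
  rw [Hpoly, hn, Nat.add_sub_assoc (by norm_num), ← Ico_add_one_right_eq_Icc,
    sum_Ico_eq_sum_range]
  refine sum_congr (by simp) fun j hj => ?_
  rw [show n + 2 - (1 + j) = n + 1 - j by omega, add_comm 1 j]

theorem mul_coeff_eq_of_Hmix_one_one_eq (hn : 2 * m = n + 2) {E β : ℂ}
    (h11 : ∀ z, Hmix m a 1 1 z = β * ((E * z).re : ℂ) ^ n) {j : ℕ} (hj : j ≤ n) :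
    ((j + 1) * (n + 1 - j) : ℕ) * a (n + 1 - j) =
      β * (n.choose j / 2 ^ n) * E ^ j * conj E ^ (n - j) := by
  have hdiff (z : ℂ) : ∑ j ∈ range (n + 1), (((j + 1) * (n + 1 - j) : ℕ) * a (n + 1 - j)
      - β * (n.choose j / 2 ^ n) * E ^ j * conj E ^ (n - j)) * z ^ j * conj z ^ (n - j) = 0 := by
    rw [← sub_eq_zero.mpr (h11 z), Hmix_one_one_eq_sum hn, Complex.ofReal_re_pow_eq_sum, mul_sum,
      ← sum_sub_distrib]
    refine sum_congr rfl fun j _ => ?_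
    rw [map_mul]
    ring
  exact sub_eq_zero.mp (eq_zero_of_forall_sum_mul_pow_mul_conj_pow_eq_zero hdiff hj)

theorem coeff_eq_of_Hmix_one_one_eq (hn : 2 * m = n + 2) {E β : ℂ} (hE : ‖E‖ = 1)
    (h11 : ∀ z, Hmix m a 1 1 z = β * ((E * z).re : ℂ) ^ n) {j : ℕ} (hj : j ≤ n) :
    a (n + 1 - j) = β / (2 ^ n * (n + 2) * (n + 1)) * (n + 2).choose (j + 1) *
      E ^ (j + 1) * conj E ^ (n + 1 - j) := by
  have hmul := mul_coeff_eq_of_Hmix_one_one_eq hn h11 hj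
  obtain ⟨l, rfl⟩ := Nat.exists_eq_add_of_le hj
  rw [show j + l + 1 - j = l + 1 by omega, Nat.add_sub_cancel_left] at hmul
  rw [show j + l + 1 - j = l + 1 by omega]
  have hchoose : ((j + 1) * (l + 1) * (j + l + 2).choose (j + 1) : ℂ) =
      (j + l + 2) * (j + l + 1) * (j + l).choose j := by
    exact_mod_cast Nat.add_one_mul_add_one_mul_choose j l
  have hE' : E * conj E = 1 := by simp [Complex.mul_conj', hE]
  push_cast at hmul ⊢
  set A := β / (2 ^ (j + l) * ((j : ℂ) + l + 2) * (j + l + 1))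
  have hA : A * ((j + l + 2) * (j + l + 1)) = β / 2 ^ (j + l) := by
    have h₁ : (j + l + 2 : ℂ) ≠ 0 := by norm_cast
    have h₂ : (j + l + 1 : ℂ) ≠ 0 := by norm_cast
    simp only [A]
    field_simp
  have hne : ((j + 1) * (l + 1) : ℂ) ≠ 0 := by norm_cast
  apply mul_left_cancel₀ hne
  linear_combination hmul - A * E ^ (j + 1) * conj E ^ (l + 1) * hchoose
    - A * (j + l + 2) * (j + l + 1) * (j + l).choose j * E ^ j * conj E ^ l * hE'
    - (j + l).choose j * E ^ j * conj E ^ l * hA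

theorem Hpoly_eq_of_coeff_eq_s9 (hn : 2 * m = n + 2) {A E : ℂ}
    (hcoeff : ∀ j ≤ n,
      a (n + 1 - j) = A * (n + 2).choose (j + 1) * E ^ (j + 1) * conj E ^ (n + 1 - j))
    (z : ℂ) : Hpoly m a z =
      A * ((E * z + conj (E * z)) ^ (n + 2) - (E * z) ^ (n + 2) - conj (E * z) ^ (n + 2)) := by
  rw [Hpoly_eq_sum hn, add_pow_sub_pow_sub_pow, mul_sum]
  refine sum_congr rfl fun j hj => ?_
  rw [hcoeff j (by simp at hj; omega), map_mul]
  ring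

end

theorem statement_9_general (m : ℕ) (hm : 2 ≤ m) (a : ℕ → ℂ) (H : ℂ → ℝ)
    (hH : ∀ z : ℂ, (H z : ℂ) = Hpoly m a z)
    (β : ℝ) (hβ : β ≠ 0) (ν : ℝ)
    (h11 : ∀ z : ℂ, Hmix m a 1 1 z =
      ((β : ℂ)) * (((Complex.exp (Complex.I * ν) * z).re : ℝ) : ℂ) ^ (2 * m - 2)) :
    ∃ A : ℝ, A ≠ 0 ∧ ∀ z : ℂ,
      H z = A * ((2 * (Complex.exp (Complex.I * ν) * z).re) ^ (2 * m)
        - 2 * ((Complex.exp (Complex.I * ν) * z) ^ (2 * m)).re) := by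
  obtain ⟨n, hn⟩ : ∃ n, 2 * m = n + 2 := ⟨2 * m - 2, by omega⟩
  rw [show 2 * m - 2 = n by omega] at h11
  have hcoeff j (hj : j ≤ n) :=
    coeff_eq_of_Hmix_one_one_eq hn (Complex.norm_exp_I_mul_ofReal ν) h11 hj
  refine ⟨β / (2 ^ n * (n + 2) * (n + 1)), div_ne_zero hβ (by positivity),
    fun z => Complex.ofReal_injective ?_⟩
  rw [hH, Hpoly_eq_of_coeff_eq_s9 hn hcoeff, hn, ← map_pow, sub_sub, Complex.add_conj,
    Complex.add_conj]
  push_cast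
  ring

/-- if `H_{1,1̄}(z) = β (Re(e^{iν}z))^{2m−2}` with `β ≠ 0`, then `H` has the
special form `a((2Re(e^{iν}z))^{2m} − 2Re((e^{iν}z)^{2m}))`. -/
theorem statement_9 (m : ℕ) (hm : 2 ≤ m) (a : ℕ → ℂ) (H : ℂ → ℝ)
    (hH : ∀ z : ℂ, (H z : ℂ) = Hpoly m a z)
    (hgood : GoodCoeff m a)
    (β : ℝ) (hβ : β ≠ 0) (ν : ℝ)
    (h11 : ∀ z : ℂ, Hmix m a 1 1 z =
      ((β : ℂ)) * (((Complex.exp (Complex.I * ν) * z).re : ℝ) : ℂ) ^ (2 * m - 2)) :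
    ∃ A : ℝ, A ≠ 0 ∧ ∀ z : ℂ,
      H z = A * ((2 * (Complex.exp (Complex.I * ν) * z).re) ^ (2 * m)
        - 2 * ((Complex.exp (Complex.I * ν) * z) ^ (2 * m)).re) :=
  statement_9_general m hm a H hH β hβ ν h11
end
end

section
/- Let m ≥ 1 be an integer, let H be a real-valued homogeneous polynomial of degree 2m containing no harmonic terms, and let L be the greatest common divisor of the numbers 2m − 2j over all indices 1 ≤ j ≤ m with a_j ≠ 0. Then for θ ∈ ℝ, H(e^{iθ}z) = H(z) for all z ∈ ℂ if and only if exp(iLθ) = 1. -/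
open Complex Finset Metric Filter Topology Asymptotics
open scoped ENNReal NNReal

noncomputable section

/-!
Rotating `z` by `w` multiplies the monomial `z ^ j * conj z ^ (2m - j)` by the character
`w ^ j * conj w ^ (2m - j)`. Monomials of a fixed total degree `n` in `z` and `conj z` are linearly
independent as functions: on the unit circle `z ^ n * z ^ j * conj z ^ (n - j) = z ^ (2j)`, and a
polynomial vanishing on the circle is zero. Hence `H` is invariant exactly when every character
attached to a nonzero coefficient is trivial. For `|w| = 1` these characters are `w ^ (2m - 2j)` and
their conjugates, and the conditions `w ^ (2m - 2j) = 1` combine into `w ^ L = 1` because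
`w ^ n = 1 ↔ orderOf w ∣ n`.
-/

open Complex ComplexConjugate Finset Metric

theorem pow_finset_gcd_eq_one_iff {M ι : Type*} [Monoid M] (x : M) (s : Finset ι) (f : ι → ℕ) :
    x ^ s.gcd f = 1 ↔ ∀ i ∈ s, x ^ f i = 1 := by
  simp only [← orderOf_dvd_iff_pow_eq_one, Finset.dvd_gcd_iff]

open Polynomial in
theorem Polynomial.eq_zero_of_forall_eval_sphere (p : ℂ[X])
    (h : ∀ z ∈ sphere (0 : ℂ) 1, p.eval z = 0) : p = 0 :=
  p.eq_zero_of_infinite_isRoot <|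
    ((isPreconnected_sphere (by simp [rank_real_complex]) 0 1).infinite_of_nontrivial
      ⟨1, by simp, -1, by simp, by norm_num⟩).mono h

theorem Complex.pow_mul_conj_pow_of_le {w : ℂ} (hw : ‖w‖ = 1) {k l : ℕ} (hkl : k ≤ l) :
    w ^ l * conj w ^ k = w ^ (l - k) := by
  obtain ⟨d, rfl⟩ := Nat.exists_eq_add_of_le hkl
  rw [Nat.add_sub_cancel_left, add_comm, pow_add, mul_assoc, ← mul_pow, mul_conj', hw]
  simp

open Polynomial in
theorem Complex.coeff_eq_zero_of_forall_sum_mul_pow_mul_conj_pow_eq_zero {n : ℕ} {s : Finset ℕ}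
    {c : ℕ → ℂ} (hs : ∀ j ∈ s, j ≤ n)
    (h : ∀ z : ℂ, ∑ j ∈ s, c j * z ^ j * conj z ^ (n - j) = 0) {j : ℕ} (hj : j ∈ s) :
    c j = 0 := by
  set Q : ℂ[X] := ∑ i ∈ s, C (c i) * X ^ (2 * i)
  have hQ : Q = 0 := Q.eq_zero_of_forall_eval_sphere fun z hz => by
    rw [mem_sphere_zero_iff_norm] at hz
    calc Q.eval z = z ^ n * ∑ i ∈ s, c i * z ^ i * conj z ^ (n - i) := by
          simp only [Q, eval_finsetSum, eval_mul, eval_C, eval_pow, eval_X, Finset.mul_sum]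
          refine sum_congr rfl fun i hi => ?_
          have hzi := pow_mul_conj_pow_of_le hz (Nat.sub_le n i)
          rw [Nat.sub_sub_self (hs i hi)] at hzi
          linear_combination (-(c i) * z ^ i) * hzi
      _ = 0 := by rw [h, mul_zero]
  simpa [Q, finsetSum_coeff, coeff_C_mul_X_pow, hj] using congrArg (coeff · (2 * j)) hQ

theorem Hpoly_mul_eq_iff (m : ℕ) (a : ℕ → ℂ) (w : ℂ) :
    (∀ z, Hpoly m a (w * z) = Hpoly m a z) ↔
      ∀ j ∈ Icc 1 (2 * m - 1), a (2 * m - j) ≠ 0 → w ^ j * conj w ^ (2 * m - j) = 1 := by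
  have hdiff : ∀ z, Hpoly m a (w * z) - Hpoly m a z = ∑ j ∈ Icc 1 (2 * m - 1),
      a (2 * m - j) * (w ^ j * conj w ^ (2 * m - j) - 1) * z ^ j * conj z ^ (2 * m - j) := by
    intro z
    simp only [Hpoly, ← sum_sub_distrib, map_mul, mul_pow]
    exact sum_congr rfl fun _ _ => by ring
  constructor
  · intro hinv j hj ha
    have hcoeff := coeff_eq_zero_of_forall_sum_mul_pow_mul_conj_pow_eq_zero (n := 2 * m)
      (fun i hi => by have := (mem_Icc.mp hi).2; omega)
      (fun z => by rw [← hdiff, hinv, sub_self]) hj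
    exact sub_eq_zero.mp ((mul_eq_zero.mp hcoeff).resolve_left ha)
  · intro hchar z
    refine sub_eq_zero.mp ((hdiff z).trans (sum_eq_zero fun j hj => ?_))
    by_cases ha : a (2 * m - j) = 0
    · simp [ha]
    · simp [hchar j hj ha]

theorem forall_pow_mul_conj_pow_eq_one_iff_of_symm {m : ℕ} {a : ℕ → ℂ}
    (hsymm : ∀ j ∈ Icc 1 (2 * m - 1), a j = conj (a (2 * m - j))) {w : ℂ} (hw : ‖w‖ = 1) :
    (∀ j ∈ Icc 1 (2 * m - 1), a (2 * m - j) ≠ 0 → w ^ j * conj w ^ (2 * m - j) = 1) ↔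
      ∀ k ∈ Icc 1 m, a k ≠ 0 → w ^ (2 * m - 2 * k) = 1 := by
  constructor
  · intro hchar k hk ha
    rw [mem_Icc] at hk
    have h := hchar (2 * m - k) (mem_Icc.mpr (by omega)) (by rwa [Nat.sub_sub_self (by omega)])
    rw [Nat.sub_sub_self (by omega), pow_mul_conj_pow_of_le hw (by omega)] at h
    convert h using 2
    omega
  · intro hroot j hj ha
    rw [mem_Icc] at hj
    rcases le_total m j with hmj | hjm
    · rw [pow_mul_conj_pow_of_le hw (by omega)]
      convert hroot (2 * m - j) (mem_Icc.mpr (by omega)) ha using 2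
      omega
    · have hj' : a j ≠ 0 := by
        rw [hsymm j (mem_Icc.mpr (by omega))]
        exact (map_ne_zero _).mpr ha
      rw [← map_eq_one_iff _ (starRingEnd ℂ).injective, map_mul, map_pow, map_pow, conj_conj,
        mul_comm, pow_mul_conj_pow_of_le hw (by omega)]
      convert hroot j (mem_Icc.mpr (by omega)) hj' using 2
      omega

open scoped Classical in
theorem statement_10_general (m : ℕ) (a : ℕ → ℂ) (H : ℂ → ℝ)
    (hH : ∀ z : ℂ, (H z : ℂ) = Hpoly m a z)
    (hgood : GoodCoeff m a) (θ : ℝ) :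
    (∀ z : ℂ, H (Complex.exp (Complex.I * θ) * z) = H z) ↔
      Complex.exp (Complex.I * ((Finset.gcd
          ((Finset.Icc 1 m).filter fun j => a j ≠ 0) fun j => 2 * m - 2 * j : ℕ) : ℂ)
        * (θ : ℂ)) = 1 := by
  set w := Complex.exp (Complex.I * θ)
  have hexp (n : ℕ) : Complex.exp (Complex.I * (n : ℂ) * θ) = w ^ n := by
    rw [← Complex.exp_nat_mul]; ring_nf
  rw [hexp, pow_finset_gcd_eq_one_iff]
  simp only [mem_filter, and_imp]
  rw [← forall_pow_mul_conj_pow_eq_one_iff_of_symm hgood.1 (norm_exp_I_mul_ofReal θ), ← Hpoly_mul_eq_iff]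
  exact forall_congr' fun z => by rw [← ofReal_inj, hH, hH]

open scoped Classical in
/-- `H(e^{iθ}z) = H(z)` for all `z` iff `e^{iθ}` is an `L`-root of unity. -/
theorem statement_10 (m : ℕ) (hm : 1 ≤ m) (a : ℕ → ℂ) (H : ℂ → ℝ)
    (hH : ∀ z : ℂ, (H z : ℂ) = Hpoly m a z)
    (hgood : GoodCoeff m a) (θ : ℝ) :
    (∀ z : ℂ, H (Complex.exp (Complex.I * θ) * z) = H z) ↔
      Complex.exp (Complex.I * ((Finset.gcd
          ((Finset.Icc 1 m).filter fun j => a j ≠ 0) fun j => 2 * m - 2 * j : ℕ) : ℂ)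
        * (θ : ℂ)) = 1 :=
  statement_10_general m a H hH hgood θ

end
end

section
/- Let m ≥ 1 be an integer and let H be a subharmonic real-valued homogeneous polynomial of degree 2m containing no harmonic terms with ‖H‖ = 1. Let η_n ∈ M_H with η_n → (0,0), and suppose there are constants c, C > 0 with c|η_{n,1}|^{2m} ≤ ε(η_n) ≤ C|η_{n,1}|^{2m} for all n. Then: (a) there exist constants c′, C′ > 0 with c′ ε(η_n)^{1/(2m)} ≤ τ(η_n) ≤ C′ ε(η_n)^{1/(2m)} for all n; (b) if moreover η_{n,1}/ε(η_n)^{1/(2m)} → α ∈ ℂ and τ(η_n)/ε(η_n)^{1/(2m)} → β ∈ ℝ as n → ∞, then β > 0 and for all integers j, q ≥ 1 with j+q ≤ 2m the coefficient H_{j,q̄}(η_{n,1}) τ(η_n)^{j+q}/(j! q! ε(η_n)) converges to β^{j+q} H_{j,q̄}(α)/(j! q!); consequently, for every w ∈ ℂ, H_{η_n}(w) converges to H_∞(w) := H(α + βw) − H(α) − 2Re(Σ_{j=1}^{2m−1} (H_j(α)/j!) (βw)^j), H_∞ is a polynomial of degree exactly 2m, and M_{H_∞} = {(z₁,z₂)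 : Re z₂ + H_∞(z₁) < 0} is biholomorphically equivalent to M_H. -/
open Complex Finset Metric Filter Topology Asymptotics
open scoped ENNReal NNReal

noncomputable section

/-!
Put `s = ε(η)^{1/2m}`, `ρ = τ(η)/s` and `ζ = η₁/s`. Since `H_{j,q̄}` is homogeneous of degree
`2m-j-q`, the coefficients of `H_{η,τ}` are `ρ^{j+q} H_{j,q̄}(ζ)/(j! q!)`. For `‖a_{j₀}‖ = 1` the
coefficient of `w^{2m-j₀} w̄^{j₀}` has modulus `ρ^{2m}`, so `‖H_{η,τ}‖ = 1` gives `ρ ≤ 1`.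
The hypothesis `c|η₁|^{2m} ≤ ε` keeps `ζ` in a fixed disc, on which the `H_{j,q̄}` are bounded by
some `M`; a coefficient of modulus `1` then gives `1 ≤ ρ^{j+q} M ≤ ρ M`. The coefficients converge
by continuity in `(ρ, ζ)`.

Expanding `H(α + u)` around `α` gives `H(α)`, a holomorphic polynomial `h(u)`, its conjugate, and
the mixed terms. Hence `H_∞(w)` is the mixed part at `u = βw`, and the shear
`(z₁, z₂) ↦ (α + βz₁, z₂ - H(α) - 2h(βz₁))` maps `M_{H_∞}` biholomorphically onto `M_H`.
-/

-- `Hmix m a 0 q` would pick up the spurious term `k = 0` (with `a (2 * m)`), so the expansion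
-- of `Hpoly` uses binomial coefficients instead.
def taylorCoeff (m : ℕ) (a : ℕ → ℂ) (z : ℂ) (j q : ℕ) : ℂ :=
  ∑ k ∈ Icc 1 (2 * m - 1),
    a (2 * m - k) * (k.choose j : ℂ) * ((2 * m - k).choose q : ℂ) *
      z ^ (k - j) * (starRingEnd ℂ z) ^ (2 * m - k - q)

def holPart (m : ℕ) (a : ℕ → ℂ) (z u : ℂ) : ℂ :=
  ∑ j ∈ Icc 1 (2 * m - 1), Hhol m a j z / (j.factorial : ℂ) * u ^ j

def mixedPart (m : ℕ) (a : ℕ → ℂ) (z u : ℂ) : ℂ :=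
  ∑ jq ∈ coeffPairs m, Hmix m a jq.1 jq.2 z / ((jq.1.factorial : ℂ) * (jq.2.factorial : ℂ)) *
    u ^ jq.1 * (starRingEnd ℂ u) ^ jq.2

section Taylor

variable (m : ℕ) (a : ℕ → ℂ)

theorem add_pow_eq_sum_range {R : Type*} [CommSemiring R] {n N : ℕ} (hn : n ≤ N) (x y : R) :
    (x + y) ^ n = ∑ j ∈ range (N + 1), y ^ j * x ^ (n - j) * (n.choose j : R) := by
  rw [add_comm, add_pow]
  refine sum_subset (range_subset_range.2 (by omega)) fun j _ hj => ?_
  rw [Nat.choose_eq_zero_of_lt (by simp at hj; omega)]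
  simp

theorem Hpoly_add_eq_sum_taylorCoeff (z u : ℂ) :
    Hpoly m a (z + u) = ∑ j ∈ range (2 * m + 1), ∑ q ∈ range (2 * m + 1),
      taylorCoeff m a z j q * u ^ j * (starRingEnd ℂ u) ^ q := by
  simp only [taylorCoeff, sum_mul]
  rw [sum_congr rfl fun j _ => sum_comm, sum_comm, Hpoly]
  refine sum_congr rfl fun k hk => ?_
  simp only [mem_Icc] at hk
  rw [add_pow_eq_sum_range (N := 2 * m) (by omega), map_add,
    add_pow_eq_sum_range (N := 2 * m) (by omega)]
  simp only [mul_sum, sum_mul]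
  rw [sum_comm]
  exact sum_congr rfl fun j _ => sum_congr rfl fun q _ => by ring

theorem Hmix_eq_taylorCoeff_mul {j : ℕ} (hj : 1 ≤ j) (q : ℕ) (z : ℂ) :
    Hmix m a j q z = taylorCoeff m a z j q * (j.factorial : ℂ) * (q.factorial : ℂ) := by
  unfold Hmix taylorCoeff
  rw [sum_mul, sum_mul]
  refine sum_subset (fun k hk => ?_) (fun k hk hk' => ?_) |>.symm.trans
    (sum_congr rfl fun k hk => ?_) |>.symm
  · simp only [mem_filter, mem_Icc] at hk ⊢
    omega
  · simp only [mem_filter, mem_Icc, not_and, not_le] at hk hk'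
    rcases Nat.lt_or_ge k j with h | h
    · simp [Nat.choose_eq_zero_of_lt h]
    · simp [Nat.choose_eq_zero_of_lt (hk' ⟨h, hk.2⟩)]
  · rw [Nat.descFactorial_eq_factorial_mul_choose, Nat.descFactorial_eq_factorial_mul_choose]
    push_cast
    ring

theorem Hhol_eq_taylorCoeff_mul {j : ℕ} (hj : 1 ≤ j) (z : ℂ) :
    Hhol m a j z = taylorCoeff m a z j 0 * (j.factorial : ℂ) := by
  simpa [Hmix, Hhol] using Hmix_eq_taylorCoeff_mul m a hj 0 z

theorem taylorCoeff_zero_zero (z : ℂ) : taylorCoeff m a z 0 0 = Hpoly m a z :=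
  sum_congr rfl fun k _ => by simp

theorem taylorCoeff_eq_zero_of_lt_add {j q : ℕ} (h : 2 * m < j + q) (z : ℂ) :
    taylorCoeff m a z j q = 0 := by
  refine sum_eq_zero fun k hk => ?_
  simp only [mem_Icc] at hk
  rcases Nat.lt_or_ge k j with h1 | h1
  · simp [Nat.choose_eq_zero_of_lt h1]
  · simp [Nat.choose_eq_zero_of_lt (show 2 * m - k < q by omega)]

theorem taylorCoeff_eq_zero_of_two_mul_le {j : ℕ} (h : 2 * m ≤ j) (z : ℂ) (q : ℕ) :
    taylorCoeff m a z j q = 0 :=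
  sum_eq_zero fun k hk => by simp [Nat.choose_eq_zero_of_lt (by simp at hk; omega : k < j)]

theorem taylorCoeff_zero_eq_conj
    (hre : ∀ j ∈ Icc 1 (2 * m - 1), a j = starRingEnd ℂ (a (2 * m - j))) (z : ℂ) (q : ℕ) :
    taylorCoeff m a z 0 q = starRingEnd ℂ (taylorCoeff m a z q 0) := by
  rw [taylorCoeff, taylorCoeff, map_sum]
  refine sum_nbij' (fun k => 2 * m - k) (fun k => 2 * m - k) ?_ ?_ ?_ ?_ fun k hk => ?_
  iterate 4 (intro k hk; simp only [mem_Icc] at hk ⊢; omega)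
  simp only [mem_Icc] at hk
  have hk' : 2 * m - (2 * m - k) = k := by omega
  rw [hre (2 * m - k) (by simp only [mem_Icc]; omega), hk']
  simp only [map_mul, map_pow, Complex.conj_conj, map_natCast, Nat.sub_zero]
  ring

theorem holPart_eq_sum_taylorCoeff (z u : ℂ) :
    holPart m a z u = ∑ j ∈ Icc 1 (2 * m), taylorCoeff m a z j 0 * u ^ j := by
  rw [holPart]
  refine sum_subset_zero_on_sdiff (Icc_subset_Icc_right (by omega)) (fun j hj => ?_)
    (fun j hj => ?_)
  · rw [Finset.mem_sdiff, mem_Icc, mem_Icc] at hj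
    rw [taylorCoeff_eq_zero_of_two_mul_le m a (by omega), zero_mul]
  · have : (j.factorial : ℂ) ≠ 0 := mod_cast j.factorial_ne_zero
    rw [Hhol_eq_taylorCoeff_mul m a (mem_Icc.1 hj).1]
    field_simp

theorem mixedPart_eq_sum_taylorCoeff (z u : ℂ) :
    mixedPart m a z u = ∑ j ∈ Icc 1 (2 * m), ∑ q ∈ Icc 1 (2 * m),
      taylorCoeff m a z j q * u ^ j * (starRingEnd ℂ u) ^ q := by
  rw [← sum_product', mixedPart, coeffPairs, sum_filter]
  refine sum_congr rfl fun jq hjq => ?_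
  simp only [mem_product, mem_Icc] at hjq
  split_ifs with h
  · have : (jq.1.factorial : ℂ) ≠ 0 := mod_cast jq.1.factorial_ne_zero
    have : (jq.2.factorial : ℂ) ≠ 0 := mod_cast jq.2.factorial_ne_zero
    rw [Hmix_eq_taylorCoeff_mul m a hjq.1.1]
    field_simp
  · simp [taylorCoeff_eq_zero_of_lt_add m a (not_le.1 h)]

theorem Hpoly_add (hre : ∀ j ∈ Icc 1 (2 * m - 1), a j = starRingEnd ℂ (a (2 * m - j)))
    (z u : ℂ) :
    Hpoly m a (z + u) =
      Hpoly m a z + holPart m a z u + starRingEnd ℂ (holPart m a z u) + mixedPart m a z u := by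
  have hR : range (2 * m + 1) = insert 0 (Icc 1 (2 * m)) := by
    ext; simp only [mem_range, mem_insert, mem_Icc]; omega
  have h0 : 0 ∉ Icc 1 (2 * m) := by simp
  rw [Hpoly_add_eq_sum_taylorCoeff, hR, holPart_eq_sum_taylorCoeff, mixedPart_eq_sum_taylorCoeff,
    map_sum]
  simp only [sum_insert h0, sum_add_distrib, taylorCoeff_zero_zero, pow_zero, mul_one]
  rw [sum_congr rfl fun q _ => by rw [taylorCoeff_zero_eq_conj m a hre]]
  simp only [map_mul, map_pow]
  ring

end Taylor

section Hmix

variable (m : ℕ) (a : ℕ → ℂ)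

theorem Hmix_ofReal_mul {j q : ℕ} (t : ℝ) (z : ℂ) :
    Hmix m a j q (t * z) = (t : ℂ) ^ (2 * m - j - q) * Hmix m a j q z := by
  rw [Hmix, Hmix, mul_sum]
  refine sum_congr rfl fun k hk => ?_
  simp only [mem_filter, mem_Icc] at hk
  rw [map_mul, Complex.conj_ofReal, mul_pow, mul_pow,
    show 2 * m - j - q = (k - j) + (2 * m - k - q) by omega, pow_add]
  ring

theorem Hmix_two_mul_sub {j : ℕ} (hj : j ∈ Icc 1 (2 * m - 1)) (z : ℂ) :
    Hmix m a (2 * m - j) j z = a j * (2 * m - j).factorial * j.factorial := by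
  simp only [mem_Icc] at hj
  have hk : (Icc (2 * m - j) (2 * m - 1)).filter (fun k => j ≤ 2 * m - k) = {2 * m - j} := by
    ext k
    simp only [mem_filter, mem_Icc, mem_singleton]
    omega
  rw [Hmix, hk, sum_singleton, show 2 * m - (2 * m - j) = j by omega]
  simp [Nat.descFactorial_self]

theorem continuous_Hmix (j q : ℕ) : Continuous (Hmix m a j q) := by
  unfold Hmix
  fun_prop

theorem mixedPart_ofReal_mul (z : ℂ) (β : ℝ) (w : ℂ) :
    mixedPart m a z (β * w) = ∑ jq ∈ coeffPairs m,
      (β : ℂ) ^ (jq.1 + jq.2) * Hmix m a jq.1 jq.2 z /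
        ((jq.1.factorial : ℂ) * (jq.2.factorial : ℂ)) * w ^ jq.1 * (starRingEnd ℂ w) ^ jq.2 := by
  refine sum_congr rfl fun jq _ => ?_
  rw [map_mul, Complex.conj_ofReal, mul_pow, mul_pow, pow_add]
  ring

theorem sub_sub_two_mul_re_holPart_eq_mixedPart {H : ℂ → ℝ} (hH : ∀ z, (H z : ℂ) = Hpoly m a z)
    (hre : ∀ j ∈ Icc 1 (2 * m - 1), a j = starRingEnd ℂ (a (2 * m - j))) (z u : ℂ) :
    ((H (z + u) - H z - 2 * (holPart m a z u).re : ℝ) : ℂ) = mixedPart m a z u := by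
  rw [Complex.ofReal_sub, Complex.ofReal_sub, hH, hH, Hpoly_add m a hre, Complex.ofReal_mul,
    Complex.re_eq_add_conj]
  push_cast
  ring

end Hmix

theorem isBiholoOn_modelM_affine (H : ℂ → ℝ) {P : ℂ → ℂ} (hP : Differentiable ℂ P) (α : ℂ)
    {β : ℂ} (hβ : β ≠ 0) :
    IsBiholoOn (modelM fun w => H (α + β * w) - (P w).re) (modelM H)
      fun z => (α + β * z.1, z.2 - P z.1) := by
  refine ⟨by fun_prop, fun z hz => ?_, fun z => ((z.1 - α) / β, z.2 + P ((z.1 - α) / β)),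
    by fun_prop, fun z hz => ?_, fun z _ => ?_, fun z _ => ?_⟩
  · simp only [modelM, Set.mem_ofPred_eq, Complex.sub_re] at hz ⊢
    linarith
  · simp only [modelM, Set.mem_ofPred_eq, Complex.add_re, mul_div_cancel₀ _ hβ,
      add_sub_cancel] at hz ⊢
    linarith
  · simp [mul_div_cancel_left₀ _ hβ]
  · simp [mul_div_cancel₀ _ hβ]

theorem exists_isBiholoOn_modelM_sub_holPart (m : ℕ) (a : ℕ → ℂ) (H : ℂ → ℝ) (α : ℂ) {β : ℂ}
    (hβ : β ≠ 0) :
    ∃ F, IsBiholoOn (modelM fun w => H (α + β * w) - H α - 2 * (holPart m a α (β * w)).re)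
      (modelM H) F := by
  have hP : Differentiable ℂ fun w => (H α : ℂ) + 2 * holPart m a α (β * w) := by
    unfold holPart
    fun_prop
  have hHinf : (fun w => H (α + β * w) - H α - 2 * (holPart m a α (β * w)).re) =
      fun w => H (α + β * w) - ((H α : ℂ) + 2 * holPart m a α (β * w)).re := by
    ext w
    simp only [add_re, ofReal_re, mul_re, re_ofNat, im_ofNat, zero_mul, sub_zero]
    ring
  exact ⟨_, hHinf ▸ isBiholoOn_modelM_affine H hP α hβ⟩

theorem exists_eq_one_of_sup_toNNReal_eq_one {ι : Type*} {s : Finset ι} {f : ι → ℝ}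
    (h : (s.sup fun i => (f i).toNNReal) = 1) : ∃ i ∈ s, f i = 1 := by
  have hs : s.Nonempty := nonempty_iff_ne_empty.2 fun hs => by simp [hs] at h
  obtain ⟨i, hi, hsup⟩ := exists_mem_eq_sup s hs fun i => (f i).toNNReal
  exact ⟨i, hi, Real.toNNReal_eq_one.1 (hsup ▸ h)⟩

theorem le_one_of_sup_toNNReal_eq_one {ι : Type*} {s : Finset ι} {f : ι → ℝ}
    (h : (s.sup fun i => (f i).toNNReal) = 1) {i : ι} (hi : i ∈ s) : f i ≤ 1 :=
  Real.toNNReal_le_one.1 (h ▸ le_sup (f := fun i => (f i).toNNReal) hi)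

theorem le_max_one_of_pow_le {x b : ℝ} {n : ℕ} (hn : n ≠ 0) (h : x ^ n ≤ b) :
    x ≤ max 1 b := by
  rcases le_or_gt x 1 with hx1 | hx1
  · exact le_max_of_le_left hx1
  · exact le_max_of_le_right ((le_self_pow₀ hx1.le hn).trans h)

theorem rpow_one_div_two_mul_pow {x : ℝ} (hx : 0 ≤ x) {m : ℕ} (hm : 1 ≤ m) :
    (x ^ ((1 : ℝ) / (2 * (m : ℝ)))) ^ (2 * m) = x := by
  rw [show (1 : ℝ) / (2 * m) = ((2 * m : ℕ) : ℝ)⁻¹ by push_cast; ring]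
  exact Real.rpow_inv_natCast_pow hx (by omega)

theorem exists_norm_Hmix_le (m : ℕ) (a : ℕ → ℂ) (R : ℝ) :
    ∃ M : ℝ, ∀ jq ∈ coeffPairs m, ∀ z : ℂ, ‖z‖ ≤ R → ‖Hmix m a jq.1 jq.2 z‖ ≤ M := by
  have hg : Continuous fun z => ∑ jq ∈ coeffPairs m, ‖Hmix m a jq.1 jq.2 z‖ :=
    continuous_finsetSum _ fun jq _ => (continuous_Hmix m a _ _).norm
  obtain ⟨M, hM⟩ := (isCompact_closedBall (0 : ℂ) R).exists_bound_of_continuousOn hg.continuousOn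
  refine ⟨M, fun jq hjq z hz => ?_⟩
  calc ‖Hmix m a jq.1 jq.2 z‖ ≤ ∑ jq ∈ coeffPairs m, ‖Hmix m a jq.1 jq.2 z‖ :=
        single_le_sum (f := fun jq : ℕ × ℕ => ‖Hmix m a jq.1 jq.2 z‖) (fun _ _ => norm_nonneg _) hjq
    _ ≤ M := (Real.le_norm_self _).trans (hM z (mem_closedBall_zero_iff.2 hz))

section Rescaling

variable {m : ℕ} {a : ℕ → ℂ} {H : ℂ → ℝ}

theorem scaledCoeff_eq (p : ℂ × ℂ) (τ : ℝ) {s : ℝ} (hs : 0 < s) (hsε : s ^ (2 * m) = epsAt H p)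
    {j q : ℕ} (hjq : j + q ≤ 2 * m) :
    scaledCoeff m a H p τ j q = ((τ / s : ℝ) : ℂ) ^ (j + q) * Hmix m a j q (p.1 / s) /
      ((j.factorial : ℂ) * (q.factorial : ℂ)) := by
  have hsC : (s : ℂ) ≠ 0 := mod_cast hs.ne'
  have hj : (j.factorial : ℂ) ≠ 0 := mod_cast j.factorial_ne_zero
  have hq : (q.factorial : ℂ) ≠ 0 := mod_cast q.factorial_ne_zero
  have hε : (epsAt H p : ℂ) = (s : ℂ) ^ (2 * m - j - q) * (s : ℂ) ^ (j + q) := by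
    rw [← pow_add, show 2 * m - j - q + (j + q) = 2 * m by omega, ← hsε]
    push_cast; rfl
  rw [scaledCoeff, ← mul_div_cancel₀ p.1 hsC, Hmix_ofReal_mul, hε, mul_div_cancel_left₀ _ hsC]
  push_cast
  rw [div_pow]
  field_simp

theorem div_le_one_of_HscaledNorm_eq_one {j₀ : ℕ} (hj₀ : j₀ ∈ Icc 1 (2 * m - 1)) (ha : ‖a j₀‖ = 1)
    {p : ℂ × ℂ} {τ s : ℝ} (hτ : 0 < τ) (hs : 0 < s) (hsε : s ^ (2 * m) = epsAt H p)
    (hnorm : HscaledNorm m a H p τ = 1) :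
    τ / s ≤ 1 := by
  have hj₀' := mem_Icc.1 hj₀
  have hpair : (2 * m - j₀, j₀) ∈ coeffPairs m := by
    simp only [coeffPairs, mem_filter, mem_product, mem_Icc]
    omega
  have hle := le_one_of_sup_toNNReal_eq_one (NNReal.coe_eq_one.1 hnorm) hpair
  have hj : ((2 * m - j₀).factorial : ℂ) * (j₀.factorial : ℂ) ≠ 0 := mod_cast by positivity
  rw [scaledCoeff_eq p τ hs hsε (by omega), Hmix_two_mul_sub m a hj₀,
    show 2 * m - j₀ + j₀ = 2 * m by omega, mul_assoc (a j₀),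
    mul_div_assoc, mul_div_cancel_right₀ _ hj, norm_mul, norm_pow, ha, mul_one,
    Complex.norm_real, Real.norm_of_nonneg (by positivity)] at hle
  exact (pow_le_one_iff_of_nonneg (by positivity) (by omega)).1 hle

theorem one_le_div_mul_of_HscaledNorm_eq_one {p : ℂ × ℂ} {τ s M : ℝ} (hτ : 0 < τ) (hs : 0 < s)
    (hsε : s ^ (2 * m) = epsAt H p) (hnorm : HscaledNorm m a H p τ = 1) (hρ : τ / s ≤ 1)
    (hM : ∀ jq ∈ coeffPairs m, ‖Hmix m a jq.1 jq.2 (p.1 / s)‖ ≤ M) :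
    1 ≤ τ / s * M := by
  obtain ⟨jq, hjq, h1⟩ := exists_eq_one_of_sup_toNNReal_eq_one (NNReal.coe_eq_one.1 hnorm)
  have hM' := hM jq hjq
  simp only [coeffPairs, mem_filter, mem_product, mem_Icc] at hjq
  have hfact : (1 : ℝ) ≤ jq.1.factorial * jq.2.factorial := mod_cast Nat.one_le_iff_ne_zero.2
    (by positivity)
  rw [scaledCoeff_eq p τ hs hsε hjq.2, norm_div, norm_mul, norm_pow, Complex.norm_real,
    Real.norm_of_nonneg (by positivity), norm_mul, Complex.norm_natCast,
    Complex.norm_natCast] at h1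
  calc 1 = (τ / s) ^ (jq.1 + jq.2) * ‖Hmix m a jq.1 jq.2 (p.1 / s)‖ /
        (jq.1.factorial * jq.2.factorial : ℝ) := h1.symm
    _ ≤ (τ / s) ^ (jq.1 + jq.2) * ‖Hmix m a jq.1 jq.2 (p.1 / s)‖ :=
        div_le_self (by positivity) hfact
    _ ≤ τ / s * M :=
        mul_le_mul (pow_le_of_le_one (by positivity) hρ (by omega)) hM' (norm_nonneg _)
          (by positivity)

end Rescaling

section Sequences

variable {m : ℕ} {a : ℕ → ℂ} {H : ℂ → ℝ} {η : ℕ → ℂ × ℂ} {s τ : ℕ → ℝ}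

theorem exists_pos_le_div_and_div_le_one {j₀ : ℕ} (hj₀ : j₀ ∈ Icc 1 (2 * m - 1))
    (ha : ‖a j₀‖ = 1) {c : ℝ} (hc : 0 < c)
    (hs : ∀ n, 0 < s n ∧ s n ^ (2 * m) = epsAt H (η n))
    (hcomp : ∀ n, c * ‖(η n).1‖ ^ (2 * m) ≤ epsAt H (η n))
    (hτ : ∀ n, 0 < τ n ∧ HscaledNorm m a H (η n) (τ n) = 1) :
    ∃ c' > 0, ∀ n, c' ≤ τ n / s n ∧ τ n / s n ≤ 1 := by
  obtain ⟨M, hM⟩ := exists_norm_Hmix_le m a (max 1 c⁻¹)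
  refine ⟨(max M 1)⁻¹, inv_pos.2 (lt_max_of_lt_right one_pos), fun n => ?_⟩
  obtain ⟨hsn, hsε⟩ := hs n
  have hρ := div_le_one_of_HscaledNorm_eq_one hj₀ ha (hτ n).1 hsn hsε (hτ n).2
  have hζ : ‖(η n).1 / s n‖ ≤ max 1 c⁻¹ := by
    refine le_max_one_of_pow_le (n := 2 * m) (by simp only [mem_Icc] at hj₀; omega) ?_
    rw [norm_div, Complex.norm_real, Real.norm_of_nonneg hsn.le, div_pow,
      div_le_iff₀ (pow_pos hsn _), hsε, inv_mul_eq_div, le_div_iff₀' hc]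
    exact hcomp n
  have h1 := one_le_div_mul_of_HscaledNorm_eq_one (hτ n).1 hsn hsε (hτ n).2 hρ
    fun jq hjq => hM jq hjq _ hζ
  refine ⟨?_, hρ⟩
  rw [inv_le_iff_one_le_mul₀ (lt_max_of_lt_right one_pos)]
  exact h1.trans (mul_le_mul_of_nonneg_left (le_max_left _ _) (div_nonneg (hτ n).1.le hsn.le))

theorem tendsto_scaledCoeff (hs : ∀ n, 0 < s n ∧ s n ^ (2 * m) = epsAt H (η n)) {α : ℂ} {β : ℝ}
    (hα : Tendsto (fun n => (η n).1 / (s n : ℂ)) atTop (𝓝 α))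
    (hβ : Tendsto (fun n => τ n / s n) atTop (𝓝 β)) {j q : ℕ} (hjq : j + q ≤ 2 * m) :
    Tendsto (fun n => scaledCoeff m a H (η n) (τ n) j q) atTop
      (𝓝 ((β : ℂ) ^ (j + q) * Hmix m a j q α / ((j.factorial : ℂ) * (q.factorial : ℂ)))) := by
  refine Tendsto.congr (fun n => (scaledCoeff_eq (η n) (τ n) (hs n).1 (hs n).2 hjq).symm) ?_
  exact ((((Complex.continuous_ofReal.tendsto β).comp hβ).pow _).mul
    (((continuous_Hmix m a j q).tendsto α).comp hα)).div_const _

end Sequences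

theorem statement_14_general (m : ℕ) (hm : 1 ≤ m) (a : ℕ → ℂ) (H : ℂ → ℝ)
    (hH : ∀ z : ℂ, (H z : ℂ) = Hpoly m a z)
    (hgood : GoodCoeff m a)
    (hnorm : (((Finset.Icc 1 (2 * m - 1)).sup fun j =>
      Real.toNNReal ‖a j‖) : ℝ≥0) = 1)
    (η : ℕ → ℂ × ℂ) (hη : ∀ n, η n ∈ modelM H)
    (c C : ℝ) (hc : 0 < c)
    (hcomp : ∀ n, c * ‖(η n).1‖ ^ (2 * m) ≤ epsAt H (η n) ∧
      epsAt H (η n) ≤ C * ‖(η n).1‖ ^ (2 * m))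
    (τn : ℕ → ℝ) (hτ : ∀ n, 0 < τn n ∧ HscaledNorm m a H (η n) (τn n) = 1) :
    (∃ c' C' : ℝ, 0 < c' ∧ 0 < C' ∧ ∀ n,
      c' * epsAt H (η n) ^ ((1 : ℝ) / (2 * (m : ℝ))) ≤ τn n ∧
      τn n ≤ C' * epsAt H (η n) ^ ((1 : ℝ) / (2 * (m : ℝ)))) ∧
    (∀ (α : ℂ) (β : ℝ),
      Filter.Tendsto (fun n => (η n).1 /
          ((epsAt H (η n) ^ ((1 : ℝ) / (2 * (m : ℝ))) : ℝ) : ℂ))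
        Filter.atTop (𝓝 α) →
      Filter.Tendsto (fun n => τn n / epsAt H (η n) ^ ((1 : ℝ) / (2 * (m : ℝ))))
        Filter.atTop (𝓝 β) →
      0 < β ∧
      (∀ j q : ℕ, 1 ≤ j → 1 ≤ q → j + q ≤ 2 * m →
        Filter.Tendsto (fun n => scaledCoeff m a H (η n) (τn n) j q) Filter.atTop
          (𝓝 (((β : ℂ)) ^ (j + q) * Hmix m a j q α /
            ((j.factorial : ℂ) * (q.factorial : ℂ))))) ∧
      (let Hinf : ℂ → ℝ := fun w => H (α + (β : ℂ) * w) - H α -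
         2 * (∑ j ∈ Finset.Icc 1 (2 * m - 1),
           Hhol m a j α / (j.factorial : ℂ) * ((β : ℂ) * w) ^ j).re
       (∀ w : ℂ, Filter.Tendsto (fun n => ∑ jq ∈ coeffPairs m,
           scaledCoeff m a H (η n) (τn n) jq.1 jq.2 * w ^ jq.1 *
             (starRingEnd ℂ w) ^ jq.2)
         Filter.atTop (𝓝 ((Hinf w : ℝ) : ℂ))) ∧
       (∃ d : ℕ → ℕ → ℂ,
         (∀ w : ℂ, (Hinf w : ℂ) = ∑ jq ∈ coeffPairs m,
           d jq.1 jq.2 * w ^ jq.1 * (starRingEnd ℂ w) ^ jq.2) ∧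
         ∃ j q : ℕ, 1 ≤ j ∧ 1 ≤ q ∧ j + q = 2 * m ∧ d j q ≠ 0) ∧
       (∃ F : ℂ × ℂ → ℂ × ℂ, IsBiholoOn (modelM Hinf) (modelM H) F))) := by
  have hs (n : ℕ) : 0 < epsAt H (η n) ^ ((1 : ℝ) / (2 * (m : ℝ))) ∧
      (epsAt H (η n) ^ ((1 : ℝ) / (2 * (m : ℝ)))) ^ (2 * m) = epsAt H (η n) := by
    have hε : 0 < epsAt H (η n) := abs_pos.2 (hη n).ne
    exact ⟨by positivity, rpow_one_div_two_mul_pow hε.le hm⟩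
  obtain ⟨j₀, hj₀, ha⟩ := exists_eq_one_of_sup_toNNReal_eq_one hnorm
  obtain ⟨c', hc', hρ⟩ :=
    exists_pos_le_div_and_div_le_one hj₀ ha hc hs (fun n => (hcomp n).1) hτ
  refine ⟨⟨c', 1, hc', one_pos, fun n => ?_⟩, fun α β hα hβ => ?_⟩
  · rw [one_mul, ← le_div_iff₀ (hs n).1, ← div_le_one (hs n).1]
    exact hρ n
  have hβ₀ : 0 < β := hc'.trans_le (ge_of_tendsto' hβ fun n => (hρ n).1)
  have hcoeff (j q : ℕ) (_ : 1 ≤ j) (_ : 1 ≤ q) (hjq : j + q ≤ 2 * m) :=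
    tendsto_scaledCoeff (a := a) hs hα hβ hjq
  refine ⟨hβ₀, hcoeff, ?_⟩
  intro Hinf
  let d : ℕ → ℕ → ℂ := fun j q =>
    (β : ℂ) ^ (j + q) * Hmix m a j q α / ((j.factorial : ℂ) * (q.factorial : ℂ))
  have hHinf (w : ℂ) : (Hinf w : ℂ) = ∑ jq ∈ coeffPairs m,
      d jq.1 jq.2 * w ^ jq.1 * (starRingEnd ℂ w) ^ jq.2 :=
    (sub_sub_two_mul_re_holPart_eq_mixedPart m a hH hgood.1 α (β * w)).trans
      (mixedPart_ofReal_mul m a α β w)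
  refine ⟨fun w => ?_, ⟨d, hHinf, 2 * m - j₀, j₀, ?_⟩,
    exists_isBiholoOn_modelM_sub_holPart m a H α (mod_cast hβ₀.ne')⟩
  · rw [hHinf]
    refine tendsto_finsetSum _ fun jq hjq => ?_
    simp only [coeffPairs, mem_filter, mem_product, mem_Icc] at hjq
    exact ((hcoeff jq.1 jq.2 hjq.1.1.1 hjq.1.2.1 hjq.2).mul_const _).mul_const _
  · have hj₀' := mem_Icc.1 hj₀
    have ha₀ : a j₀ ≠ 0 := norm_ne_zero_iff.1 (ha ▸ one_ne_zero)
    refine ⟨by omega, hj₀'.1, by omega, ?_⟩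
    simp [d, Hmix_two_mul_sub m a hj₀, hβ₀.ne', ha₀, Nat.factorial_ne_zero]

/-- along a sequence converging tangentially to order `2m` to the origin,
`τ(η_n) ≈ ε(η_n)^{1/2m}`, the rescaled polynomials converge to
`H_∞(w) = H(α+βw) − H(α) − 2Re Σ H_j(α)(βw)^j/j!`, `H_∞` has degree exactly `2m`, and
`M_{H_∞}` is biholomorphically equivalent to `M_H`. -/
theorem statement_14 (m : ℕ) (hm : 1 ≤ m) (a : ℕ → ℂ) (H : ℂ → ℝ)
    (hH : ∀ z : ℂ, (H z : ℂ) = Hpoly m a z)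
    (hgood : GoodCoeff m a) (hsub : SubharmonicCoeff m a)
    (hnorm : (((Finset.Icc 1 (2 * m - 1)).sup fun j =>
      Real.toNNReal ‖a j‖) : ℝ≥0) = 1)
    (η : ℕ → ℂ × ℂ) (hη : ∀ n, η n ∈ modelM H)
    (hηlim : Filter.Tendsto η Filter.atTop (𝓝 ((0 : ℂ), (0 : ℂ))))
    (c C : ℝ) (hc : 0 < c) (hC : 0 < C)
    (hcomp : ∀ n, c * ‖(η n).1‖ ^ (2 * m) ≤ epsAt H (η n) ∧
      epsAt H (η n) ≤ C * ‖(η n).1‖ ^ (2 * m))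
    (τn : ℕ → ℝ) (hτ : ∀ n, 0 < τn n ∧ HscaledNorm m a H (η n) (τn n) = 1) :
    (∃ c' C' : ℝ, 0 < c' ∧ 0 < C' ∧ ∀ n,
      c' * epsAt H (η n) ^ ((1 : ℝ) / (2 * (m : ℝ))) ≤ τn n ∧
      τn n ≤ C' * epsAt H (η n) ^ ((1 : ℝ) / (2 * (m : ℝ)))) ∧
    (∀ (α : ℂ) (β : ℝ),
      Filter.Tendsto (fun n => (η n).1 /
          ((epsAt H (η n) ^ ((1 : ℝ) / (2 * (m : ℝ))) : ℝ) : ℂ))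
        Filter.atTop (𝓝 α) →
      Filter.Tendsto (fun n => τn n / epsAt H (η n) ^ ((1 : ℝ) / (2 * (m : ℝ))))
        Filter.atTop (𝓝 β) →
      0 < β ∧
      (∀ j q : ℕ, 1 ≤ j → 1 ≤ q → j + q ≤ 2 * m →
        Filter.Tendsto (fun n => scaledCoeff m a H (η n) (τn n) j q) Filter.atTop
          (𝓝 (((β : ℂ)) ^ (j + q) * Hmix m a j q α /
            ((j.factorial : ℂ) * (q.factorial : ℂ))))) ∧
      (let Hinf : ℂ → ℝ := fun w => H (α + (β : ℂ) * w) - H α -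
         2 * (∑ j ∈ Finset.Icc 1 (2 * m - 1),
           Hhol m a j α / (j.factorial : ℂ) * ((β : ℂ) * w) ^ j).re
       (∀ w : ℂ, Filter.Tendsto (fun n => ∑ jq ∈ coeffPairs m,
           scaledCoeff m a H (η n) (τn n) jq.1 jq.2 * w ^ jq.1 *
             (starRingEnd ℂ w) ^ jq.2)
         Filter.atTop (𝓝 ((Hinf w : ℝ) : ℂ))) ∧
       (∃ d : ℕ → ℕ → ℂ,
         (∀ w : ℂ, (Hinf w : ℂ) = ∑ jq ∈ coeffPairs m,
           d jq.1 jq.2 * w ^ jq.1 * (starRingEnd ℂ w) ^ jq.2) ∧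
         ∃ j q : ℕ, 1 ≤ j ∧ 1 ≤ q ∧ j + q = 2 * m ∧ d j q ≠ 0) ∧
       (∃ F : ℂ × ℂ → ℂ × ℂ, IsBiholoOn (modelM Hinf) (modelM H) F))) :=
  statement_14_general m hm a H hH hgood hnorm η hη c C hc hcomp τn hτ

end
end

section
/- Let m ≥ 1 be an integer and let H be a subharmonic real-valued homogeneous polynomial of degree 2m containing no harmonic terms with ‖H‖ = 1. Let η_n ∈ M_H with η_n → (0,0) and |η_{n,1}|^{2m}/ε(η_n) → 0 as n → ∞. Then for all integers j, q ≥ 1 with j+q < 2m, the coefficients H_{j,q̄}(η_{n,1}) τ(η_n)^{j+q}/(j! q! ε(η_n)) tend to 0. Consequently, if for all j, q ≥ 1 with j+q ≤ 2m the coefficients H_{j,q̄}(η_{n,1}) τ(η_n)^{j+q}/(j! q! ε(η_n)) converge to complex numbers c_{j,q}, then c_{j,q} = 0 for j+q < 2m and c_{j,q} = a_{2m−j} for j+q = 2m; that is, the limit polynomial H_∞(w) = Σ c_{j,q} w^j conj(w)^q equals H. -/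
open Complex Finset Metric Filter Topology Asymptotics
open scoped ENNReal NNReal

noncomputable section

/-!
Since `‖H‖ = 1`, some top-degree coefficient of `H_{η,τ}` has modulus exactly `τ^{2m}/ε`, so the
normalisation `‖H_{η,τ}‖ = 1` forces `τ^{2m} ≤ ε`. A coefficient of bidegree `(j,q)` with
`j + q < 2m` is `O(|η₁|^{2m-j-q} τ^{j+q}/ε)`, and with `τ^{2m} ≤ ε` its `2m`-th power is
`O((|η₁|^{2m}/ε)^{2m-j-q})`, which tends to `0`. Once the lower coefficients are below `1`, the
maximum `1` is attained in top degree, so `τ^{2m} = ε` and the top coefficients are exactly the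
`a_{2m-j}`.
-/

lemma tendsto_nhds_zero_of_tendsto_pow {ι : Type*} {l : Filter ι} {f : ι → ℝ} {k : ℕ}
    (hk : k ≠ 0) (hf : ∀ i, 0 ≤ f i) (h : Tendsto (fun i => f i ^ k) l (𝓝 0)) :
    Tendsto f l (𝓝 0) :=
  (h.rpow_const_nhds_zero (by positivity)).congr fun i => Real.pow_rpow_inv_natCast (hf i) hk

lemma pow_mul_pow_div_pow_le {x t E : ℝ} (hx : 0 ≤ x) (ht : 0 ≤ t) (hE : 0 < E) {s e : ℕ}
    (htE : t ^ (s + e) ≤ E) : (x ^ e * t ^ s / E) ^ (s + e) ≤ (x ^ (s + e) / E) ^ e :=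
  calc (x ^ e * t ^ s / E) ^ (s + e)
      = (x ^ (s + e)) ^ e * (t ^ (s + e)) ^ s / (E ^ s * E ^ e) := by
        rw [div_pow, mul_pow, ← pow_add, ← pow_mul, ← pow_mul, ← pow_mul, ← pow_mul,
          mul_comm (s + e) e, mul_comm (s + e) s]
    _ ≤ (x ^ (s + e)) ^ e * E ^ s / (E ^ s * E ^ e) := by gcongr
    _ = (x ^ (s + e) / E) ^ e := by rw [div_pow]; field_simp

section SupToNNReal

variable {ι : Type*} {s : Finset ι} {f : ι → ℝ} {c : ℝ≥0}

lemma le_of_sup_toNNReal_eq (h : (s.sup fun i => (f i).toNNReal) = c) {i : ι} (hi : i ∈ s) :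
    f i ≤ c :=
  Real.toNNReal_le_iff_le_coe.mp (h ▸ Finset.le_sup (f := fun i => (f i).toNNReal) hi)

lemma exists_eq_of_sup_toNNReal_eq (h : (s.sup fun i => (f i).toNNReal) = c) (hc : c ≠ 0)
    (hf : ∀ i, 0 ≤ f i) : ∃ i ∈ s, f i = c := by
  have hs : s.Nonempty := Finset.nonempty_iff_ne_empty.mpr fun hs => hc (by simp [← h, hs])
  obtain ⟨i, hi, hmax⟩ := Finset.exists_mem_eq_sup s hs fun i => (f i).toNNReal
  exact ⟨i, hi, by rw [← h, hmax, Real.coe_toNNReal _ (hf i)]⟩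

end SupToNNReal

section ScaledCoeff

variable {m : ℕ} {a : ℕ → ℂ} {H : ℂ → ℝ}

lemma mem_coeffPairs {jq : ℕ × ℕ} :
    jq ∈ coeffPairs m ↔ 1 ≤ jq.1 ∧ 1 ≤ jq.2 ∧ jq.1 + jq.2 ≤ 2 * m := by
  simp only [coeffPairs, Finset.mem_filter, Finset.mem_product, Finset.mem_Icc]
  omega

lemma epsAt_pos {p : ℂ × ℂ} (hp : p ∈ modelM H) : 0 < epsAt H p :=
  abs_pos.mpr hp.ne

lemma exists_norm_Hmix_le_s16 (m : ℕ) (a : ℕ → ℂ) (j q : ℕ) :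
    ∃ C, 0 ≤ C ∧ ∀ w, ‖Hmix m a j q w‖ ≤ C * ‖w‖ ^ (2 * m - j - q) := by
  refine ⟨∑ k ∈ (Finset.Icc j (2 * m - 1)).filter (fun k => q ≤ 2 * m - k),
      ‖a (2 * m - k)‖ * k.descFactorial j * (2 * m - k).descFactorial q,
    Finset.sum_nonneg fun _ _ => by positivity, fun w => ?_⟩
  rw [Finset.sum_mul]
  refine (norm_sum_le _ _).trans (Finset.sum_le_sum fun k hk => le_of_eq ?_)
  have hexp : k - j + (2 * m - k - q) = 2 * m - j - q := by
    simp only [Finset.mem_filter, Finset.mem_Icc] at hk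
    omega
  simp only [norm_mul, norm_pow, Complex.norm_natCast, Complex.norm_conj, mul_assoc,
    ← pow_add, hexp]

lemma Hmix_of_add_eq {j q : ℕ} (hq : 1 ≤ q) (h : j + q = 2 * m) (w : ℂ) :
    Hmix m a j q w = a (2 * m - j) * j.factorial * q.factorial := by
  have hset : (Finset.Icc j (2 * m - 1)).filter (fun k => q ≤ 2 * m - k) = {j} := by
    ext k
    simp only [Finset.mem_filter, Finset.mem_Icc, Finset.mem_singleton]
    omega
  have hq' : 2 * m - j = q := by omega
  simp [Hmix, hset, hq', Nat.descFactorial_self]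

lemma norm_scaledCoeff {p : ℂ × ℂ} {τ : ℝ} (hτ : 0 ≤ τ) (j q : ℕ) :
    ‖scaledCoeff m a H p τ j q‖ =
      ‖Hmix m a j q p.1‖ * τ ^ (j + q) / (j.factorial * q.factorial * epsAt H p) := by
  simp [scaledCoeff, abs_of_nonneg hτ, epsAt]

lemma scaledCoeff_of_add_eq {p : ℂ × ℂ} {τ : ℝ} {j q : ℕ} (hq : 1 ≤ q) (h : j + q = 2 * m) :
    scaledCoeff m a H p τ j q = a (2 * m - j) * ((τ ^ (2 * m) / epsAt H p : ℝ) : ℂ) := by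
  have hfac : (j.factorial * q.factorial : ℂ) ≠ 0 := by
    exact_mod_cast (j.factorial * q.factorial).pos_of_ne_zero (by positivity) |>.ne'
  rw [scaledCoeff, Hmix_of_add_eq hq h, h, ofReal_div, ofReal_pow, mul_div_assoc',
    mul_right_comm _ _ ((τ : ℂ) ^ (2 * m)), mul_right_comm _ _ ((τ : ℂ) ^ (2 * m)), mul_assoc,
    mul_comm, mul_div_mul_left _ _ hfac]

lemma norm_scaledCoeff_of_add_eq {p : ℂ × ℂ} {τ : ℝ} (hτ : 0 ≤ τ) {j q : ℕ} (hq : 1 ≤ q)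
    (h : j + q = 2 * m) :
    ‖scaledCoeff m a H p τ j q‖ = ‖a (2 * m - j)‖ * (τ ^ (2 * m) / epsAt H p) := by
  rw [scaledCoeff_of_add_eq hq h, norm_mul, Complex.norm_real,
    Real.norm_of_nonneg (div_nonneg (pow_nonneg hτ _) (show 0 ≤ epsAt H p from abs_nonneg _))]

variable {p : ℂ × ℂ} {τ : ℝ}

lemma norm_scaledCoeff_le_one (hτ : HscaledNorm m a H p τ = 1) {jq : ℕ × ℕ}
    (hjq : jq ∈ coeffPairs m) : ‖scaledCoeff m a H p τ jq.1 jq.2‖ ≤ 1 := by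
  simpa using le_of_sup_toNNReal_eq (NNReal.coe_eq_one.mp hτ) hjq

lemma pow_le_epsAt (hp : p ∈ modelM H) (hτ₀ : 0 ≤ τ) (hτ : HscaledNorm m a H p τ = 1) {i : ℕ}
    (hi : i ∈ Finset.Icc 1 (2 * m - 1)) (hai : ‖a i‖ = 1) : τ ^ (2 * m) ≤ epsAt H p := by
  obtain ⟨hi₁, hi₂⟩ := Finset.mem_Icc.mp hi
  have hmem : (2 * m - i, i) ∈ coeffPairs m := mem_coeffPairs.mpr (by omega)
  have hle := norm_scaledCoeff_le_one hτ hmem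
  rw [norm_scaledCoeff_of_add_eq hτ₀ hi₁ (by omega), Nat.sub_sub_self (by omega), hai,
    one_mul] at hle
  exact (div_le_one (epsAt_pos hp)).mp hle

lemma epsAt_le_pow (hp : p ∈ modelM H) (hτ₀ : 0 ≤ τ) (hτ : HscaledNorm m a H p τ = 1)
    (ha : ∀ k ∈ Finset.Icc 1 (2 * m - 1), ‖a k‖ ≤ 1)
    (hlow : ∀ jq ∈ coeffPairs m, jq.1 + jq.2 < 2 * m → ‖scaledCoeff m a H p τ jq.1 jq.2‖ < 1) :
    epsAt H p ≤ τ ^ (2 * m) := by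
  obtain ⟨jq, hjq, hone⟩ := exists_eq_of_sup_toNNReal_eq (NNReal.coe_eq_one.mp hτ) one_ne_zero
    fun _ => norm_nonneg _
  obtain ⟨hj, hq, hsum⟩ := mem_coeffPairs.mp hjq
  have htop : jq.1 + jq.2 = 2 * m := by
    by_contra hne
    exact (hlow jq hjq (by omega)).ne hone
  rw [norm_scaledCoeff_of_add_eq hτ₀ hq htop, NNReal.coe_one] at hone
  have hle : ‖a (2 * m - jq.1)‖ ≤ 1 := ha _ (Finset.mem_Icc.mpr (by omega))
  have hge : 1 ≤ τ ^ (2 * m) / epsAt H p := by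
    nlinarith [div_nonneg (pow_nonneg hτ₀ (2 * m)) (epsAt_pos hp).le]
  exact (one_le_div (epsAt_pos hp)).mp hge

lemma norm_scaledCoeff_pow_le (hp : p ∈ modelM H) (hτ₀ : 0 ≤ τ)
    (hτε : τ ^ (2 * m) ≤ epsAt H p) {j q : ℕ} (hjq : j + q ≤ 2 * m) {C : ℝ} (hC : 0 ≤ C)
    (hHmix : ∀ w, ‖Hmix m a j q w‖ ≤ C * ‖w‖ ^ (2 * m - j - q)) :
    ‖scaledCoeff m a H p τ j q‖ ^ (2 * m) ≤
      C ^ (2 * m) * (‖p.1‖ ^ (2 * m) / epsAt H p) ^ (2 * m - j - q) := by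
  have hε := epsAt_pos hp
  have hN : 2 * m = (j + q) + (2 * m - j - q) := by omega
  have hfac : (1 : ℝ) ≤ j.factorial * q.factorial :=
    one_le_mul_of_one_le_of_one_le (mod_cast j.factorial_pos) (mod_cast q.factorial_pos)
  have hbound : ‖scaledCoeff m a H p τ j q‖ ≤
      C * (‖p.1‖ ^ (2 * m - j - q) * τ ^ (j + q) / epsAt H p) := by
    rw [norm_scaledCoeff hτ₀, mul_div_assoc', ← mul_assoc]
    exact div_le_div₀ (by positivity) (by gcongr; exact hHmix _) hε
      (le_mul_of_one_le_left hε.le hfac)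
  calc ‖scaledCoeff m a H p τ j q‖ ^ (2 * m)
      ≤ (C * (‖p.1‖ ^ (2 * m - j - q) * τ ^ (j + q) / epsAt H p)) ^ (2 * m) := by gcongr
    _ ≤ C ^ (2 * m) * (‖p.1‖ ^ (2 * m) / epsAt H p) ^ (2 * m - j - q) := by
      rw [mul_pow]
      gcongr
      have key := pow_mul_pow_div_pow_le (norm_nonneg p.1) hτ₀ hε (s := j + q)
        (e := 2 * m - j - q) (by rwa [← hN])
      rwa [← hN] at key

end ScaledCoeff

lemma tendsto_scaledCoeff_of_add_lt {m : ℕ} {a : ℕ → ℂ} {H : ℂ → ℝ} {ι : Type*}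
    {l : Filter ι} {η : ι → ℂ × ℂ} {τ : ι → ℝ} (hη : ∀ n, η n ∈ modelM H)
    (hτ₀ : ∀ n, 0 ≤ τ n) (hτε : ∀ n, τ n ^ (2 * m) ≤ epsAt H (η n))
    (hratio : Tendsto (fun n => ‖(η n).1‖ ^ (2 * m) / epsAt H (η n)) l (𝓝 0))
    {j q : ℕ} (hjq : j + q < 2 * m) :
    Tendsto (fun n => scaledCoeff m a H (η n) (τ n) j q) l (𝓝 0) := by
  obtain ⟨C, hC, hHmix⟩ := exists_norm_Hmix_le_s16 m a j q
  have hbound : Tendsto (fun n => C ^ (2 * m) *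
      (‖(η n).1‖ ^ (2 * m) / epsAt H (η n)) ^ (2 * m - j - q)) l (𝓝 0) := by
    simpa [zero_pow (show 2 * m - j - q ≠ 0 by omega)] using
      (hratio.pow (2 * m - j - q)).const_mul (C ^ (2 * m))
  refine tendsto_zero_iff_norm_tendsto_zero.mpr
    (tendsto_nhds_zero_of_tendsto_pow (k := 2 * m) (by omega) (fun _ => norm_nonneg _) ?_)
  exact squeeze_zero (fun _ => by positivity)
    (fun n => norm_scaledCoeff_pow_le (hη n) (hτ₀ n) (hτε n) hjq.le hC hHmix) hbound

lemma sum_coeffPairs_eq_Hpoly {m : ℕ} {a : ℕ → ℂ} {cc : ℕ → ℕ → ℂ}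
    (hlow : ∀ j q : ℕ, 1 ≤ j → 1 ≤ q → j + q < 2 * m → cc j q = 0)
    (htop : ∀ j q : ℕ, 1 ≤ j → 1 ≤ q → j + q = 2 * m → cc j q = a (2 * m - j)) (w : ℂ) :
    ∑ jq ∈ coeffPairs m, cc jq.1 jq.2 * w ^ jq.1 * (starRingEnd ℂ w) ^ jq.2 = Hpoly m a w := by
  have hsub : (Finset.Icc 1 (2 * m - 1)).image (fun k => (k, 2 * m - k)) ⊆ coeffPairs m := by
    intro jq hjq
    obtain ⟨k, hk, rfl⟩ := Finset.mem_image.mp hjq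
    exact mem_coeffPairs.mpr (by simp only [Finset.mem_Icc] at hk; omega)
  have hzero : ∀ jq ∈ coeffPairs m,
      jq ∉ (Finset.Icc 1 (2 * m - 1)).image (fun k => (k, 2 * m - k)) →
        cc jq.1 jq.2 * w ^ jq.1 * (starRingEnd ℂ w) ^ jq.2 = 0 := by
    intro jq hjq hnot
    obtain ⟨hj, hq, hsum⟩ := mem_coeffPairs.mp hjq
    have hlt : jq.1 + jq.2 < 2 * m := by
      by_contra hge
      exact hnot (Finset.mem_image.mpr ⟨jq.1, Finset.mem_Icc.mpr (by omega),
        Prod.ext rfl (by simp only; omega)⟩)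
    rw [hlow _ _ hj hq hlt, zero_mul, zero_mul]
  rw [← Finset.sum_subset hsub hzero, Finset.sum_image fun k _ k' _ h => (Prod.ext_iff.mp h).1,
    Hpoly]
  refine Finset.sum_congr rfl fun k hk => ?_
  obtain ⟨hk₁, hk₂⟩ := Finset.mem_Icc.mp hk
  rw [htop k (2 * m - k) hk₁ (by omega) (by omega)]

theorem statement_16_general (m : ℕ) (a : ℕ → ℂ) (H : ℂ → ℝ)
    (hnorm : (((Finset.Icc 1 (2 * m - 1)).sup fun j =>
      Real.toNNReal ‖a j‖) : ℝ≥0) = 1)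
    (η : ℕ → ℂ × ℂ) (hη : ∀ n, η n ∈ modelM H)
    (hratio : Filter.Tendsto (fun n => ‖(η n).1‖ ^ (2 * m) / epsAt H (η n))
      Filter.atTop (𝓝 0))
    (τn : ℕ → ℝ) (hτ : ∀ n, 0 < τn n ∧ HscaledNorm m a H (η n) (τn n) = 1) :
    (∀ j q : ℕ, 1 ≤ j → 1 ≤ q → j + q < 2 * m →
      Filter.Tendsto (fun n => scaledCoeff m a H (η n) (τn n) j q)
        Filter.atTop (𝓝 0)) ∧
    (∀ cc : ℕ → ℕ → ℂ,
      (∀ j q : ℕ, 1 ≤ j → 1 ≤ q → j + q ≤ 2 * m →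
        Filter.Tendsto (fun n => scaledCoeff m a H (η n) (τn n) j q)
          Filter.atTop (𝓝 (cc j q))) →
      (∀ j q : ℕ, 1 ≤ j → 1 ≤ q → j + q < 2 * m → cc j q = 0) ∧
      (∀ j q : ℕ, 1 ≤ j → 1 ≤ q → j + q = 2 * m → cc j q = a (2 * m - j)) ∧
      (∀ w : ℂ, (∑ jq ∈ coeffPairs m,
        cc jq.1 jq.2 * w ^ jq.1 * (starRingEnd ℂ w) ^ jq.2) = Hpoly m a w)) := by
  have hτ₀ n : 0 ≤ τn n := (hτ n).1.le
  have ha k (hk : k ∈ Finset.Icc 1 (2 * m - 1)) : ‖a k‖ ≤ 1 := by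
    simpa using le_of_sup_toNNReal_eq hnorm hk
  obtain ⟨i, hi, hai⟩ := exists_eq_of_sup_toNNReal_eq hnorm one_ne_zero fun _ => norm_nonneg _
  have hτε n : τn n ^ (2 * m) ≤ epsAt H (η n) :=
    pow_le_epsAt (hη n) (hτ₀ n) (hτ n).2 hi (by simpa using hai)
  have hlow j q (_ : 1 ≤ j) (_ : 1 ≤ q) (hjq : j + q < 2 * m) :=
    tendsto_scaledCoeff_of_add_lt (a := a) hη hτ₀ hτε hratio hjq
  have hετ : ∀ᶠ n in atTop, τn n ^ (2 * m) = epsAt H (η n) := by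
    have hsmall : ∀ᶠ n in atTop, ∀ jq ∈ coeffPairs m, jq.1 + jq.2 < 2 * m →
        ‖scaledCoeff m a H (η n) (τn n) jq.1 jq.2‖ < 1 :=
      (eventually_all_finset _).mpr fun jq _ => eventually_imp_distrib_left.mpr fun hjq =>
        ((tendsto_scaledCoeff_of_add_lt hη hτ₀ hτε hratio hjq).norm.eventually_lt_const
          (by simp))
    filter_upwards [hsmall] with n hn
    exact (hτε n).antisymm (epsAt_le_pow (hη n) (hτ₀ n) (hτ n).2 ha hn)
  refine ⟨hlow, fun cc hcc => ?_⟩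
  have hcc_low j q hj hq (hjq : j + q < 2 * m) : cc j q = 0 :=
    tendsto_nhds_unique (hcc j q hj hq hjq.le) (hlow j q hj hq hjq)
  have hcc_top j q (hj : 1 ≤ j) (hq : 1 ≤ q) (hjq : j + q = 2 * m) :
      cc j q = a (2 * m - j) := by
    refine tendsto_nhds_unique (hcc j q hj hq hjq.le) (tendsto_const_nhds.congr' ?_)
    filter_upwards [hετ] with n hn
    rw [scaledCoeff_of_add_eq hq hjq, hn, div_self (epsAt_pos (hη n)).ne', ofReal_one, mul_one]
  exact ⟨hcc_low, hcc_top, sum_coeffPairs_eq_Hpoly hcc_low hcc_top⟩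

/-- along a sequence converging tangentially to order `< 2m`, the rescaled
coefficients of total degree `< 2m` tend to `0`, and the limit polynomial is `H` itself. -/
theorem statement_16 (m : ℕ) (hm : 1 ≤ m) (a : ℕ → ℂ) (H : ℂ → ℝ)
    (hH : ∀ z : ℂ, (H z : ℂ) = Hpoly m a z)
    (hgood : GoodCoeff m a) (hsub : SubharmonicCoeff m a)
    (hnorm : (((Finset.Icc 1 (2 * m - 1)).sup fun j =>
      Real.toNNReal ‖a j‖) : ℝ≥0) = 1)
    (η : ℕ → ℂ × ℂ) (hη : ∀ n, η n ∈ modelM H)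
    (hηlim : Filter.Tendsto η Filter.atTop (𝓝 ((0 : ℂ), (0 : ℂ))))
    (hratio : Filter.Tendsto (fun n => ‖(η n).1‖ ^ (2 * m) / epsAt H (η n))
      Filter.atTop (𝓝 0))
    (τn : ℕ → ℝ) (hτ : ∀ n, 0 < τn n ∧ HscaledNorm m a H (η n) (τn n) = 1) :
    (∀ j q : ℕ, 1 ≤ j → 1 ≤ q → j + q < 2 * m →
      Filter.Tendsto (fun n => scaledCoeff m a H (η n) (τn n) j q)
        Filter.atTop (𝓝 0)) ∧
    (∀ cc : ℕ → ℕ → ℂ,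
      (∀ j q : ℕ, 1 ≤ j → 1 ≤ q → j + q ≤ 2 * m →
        Filter.Tendsto (fun n => scaledCoeff m a H (η n) (τn n) j q)
          Filter.atTop (𝓝 (cc j q))) →
      (∀ j q : ℕ, 1 ≤ j → 1 ≤ q → j + q < 2 * m → cc j q = 0) ∧
      (∀ j q : ℕ, 1 ≤ j → 1 ≤ q → j + q = 2 * m → cc j q = a (2 * m - j)) ∧
      (∀ w : ℂ, (∑ jq ∈ coeffPairs m,
        cc jq.1 jq.2 * w ^ jq.1 * (starRingEnd ℂ w) ^ jq.2) = Hpoly m a w)) :=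
  statement_16_general m a H hnorm η hη hratio τn hτ
end
end
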